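/- arXiv:1910.01752 — 7 statements merged into one kernel-verified Lean document; each statement's English description precedes it below -/
import Mathlib

section
/- Let $a = (a_0,\ldots,a_{n+1}),\ x = (x_0,\ldots,x_{n+1}) \in \Delta^{n+1,u}$ and let $1 \le k \le n+1$ satisfy $a_k + \cdots + a_{n+1} \le x_{n+1} < a_{k-1} + \cdots + a_{n+1}$. Then $a \le_s x$ in $\Delta^{n+1,u}$ if and only if $(a_0,\ldots,a_{k-2},\ a_{k-1}+\cdots+a_{n+1} - x_{n+1},\ 0,\ldots,0) \le_s (x_0,\ldots,x_n)$ in $\Delta^{n,u-x_{n+1}}$. -/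
open Finset

/-!
For `j < k` the tail sums of the reduced vector over `j, …, n` are exactly the tail sums of `a`
over `j, …, n + 1` minus `x (n + 1)`, and the same holds for `x`, so the two dominance conditions
agree there. For `j ≥ k` both conditions hold automatically: the reduced vector has zero tail,
and `∑_{i ≥ j} a i ≤ ∑_{i ≥ k} a i ≤ x (n + 1) ≤ ∑_{i ≥ j} x i`.
-/

def collapseTail (a : ℕ → ℝ) (K N : ℕ) (c : ℝ) (i : ℕ) : ℝ :=
  if i < K then a i else if i = K then (∑ j ∈ Icc K N, a j) - c else 0

theorem sum_Icc_eq_sum_Ico_add_sum_Icc {M : Type*} [AddCommMonoid M] (f : ℕ → M) {j K N : ℕ}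
    (hjK : j ≤ K) (hKN : K ≤ N + 1) :
    ∑ i ∈ Icc j N, f i = ∑ i ∈ Ico j K, f i + ∑ i ∈ Icc K N, f i := by
  simp only [← Ico_add_one_right_eq_Icc]
  exact (sum_Ico_consecutive f hjK hKN).symm

section collapseTail

variable {a : ℕ → ℝ} {K N M j : ℕ} {c : ℝ}

theorem sum_collapseTail_eq_zero {s : Finset ℕ} (hs : ∀ i ∈ s, K < i) :
    ∑ i ∈ s, collapseTail a K N c i = 0 :=
  sum_eq_zero fun i hi ↦ by
    have := hs i hi
    rw [collapseTail, if_neg (by omega), if_neg (by omega)]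

theorem sum_Icc_collapseTail_of_le (hjK : j ≤ K) (hKM : K ≤ M) (hKN : K ≤ N) :
    ∑ i ∈ Icc j M, collapseTail a K N c i = ∑ i ∈ Icc j N, a i - c := by
  have hhead : ∑ i ∈ Ico j K, collapseTail a K N c i = ∑ i ∈ Ico j K, a i :=
    sum_congr rfl fun i hi ↦ if_pos (mem_Ico.1 hi).2
  have htail : ∑ i ∈ Icc K M, collapseTail a K N c i = ∑ i ∈ Icc K N, a i - c := by
    rw [Icc_eq_cons_Ioc hKM, sum_cons, sum_collapseTail_eq_zero fun i hi ↦ (mem_Ioc.1 hi).1,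
      collapseTail, if_neg (lt_irrefl K), if_pos rfl, add_zero]
  rw [sum_Icc_eq_sum_Ico_add_sum_Icc _ hjK (by omega), hhead, htail,
    sum_Icc_eq_sum_Ico_add_sum_Icc a hjK (by omega), add_sub_assoc]

end collapseTail

theorem sum_Icc_eq_sum_Icc_succ_sub {f : ℕ → ℝ} {j n : ℕ} (hj : j ≤ n + 1) :
    ∑ i ∈ Icc j n, f i = ∑ i ∈ Icc j (n + 1), f i - f (n + 1) := by
  rw [sum_Icc_succ_top hj, add_sub_cancel_right]

theorem sum_Icc_le_sum_Icc_of_sum_Icc_le_last {a x : ℕ → ℝ} {k j N : ℕ}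
    (ha : ∀ i ≤ N, 0 ≤ a i) (hx : ∀ i ≤ N, 0 ≤ x i) (hkj : k ≤ j) (hjN : j ≤ N)
    (h : ∑ i ∈ Icc k N, a i ≤ x N) : ∑ i ∈ Icc j N, a i ≤ ∑ i ∈ Icc j N, x i :=
  calc ∑ i ∈ Icc j N, a i
      ≤ ∑ i ∈ Icc k N, a i :=
        sum_le_sum_of_subset_of_nonneg (Icc_subset_Icc_left hkj)
          fun i hi _ ↦ ha i (mem_Icc.1 hi).2
    _ ≤ x N := h
    _ ≤ ∑ i ∈ Icc j N, x i :=
        single_le_sum (fun i hi ↦ hx i (mem_Icc.1 hi).2) (mem_Icc.2 ⟨hjN, le_rfl⟩)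

theorem fosd_dim_reduction_general (n : ℕ) (a x : ℕ → ℝ)
    (ha0 : ∀ i ≤ n + 1, 0 ≤ a i)
    (hx0 : ∀ i ≤ n + 1, 0 ≤ x i)
    (k : ℕ) (hk2 : k ≤ n + 1)
    (h1 : ∑ i ∈ Finset.Icc k (n + 1), a i ≤ x (n + 1))
    (m : ℕ → ℝ)
    (hm : ∀ i, m i = if i < k - 1 then a i
      else if i = k - 1 then (∑ j ∈ Finset.Icc (k - 1) (n + 1), a j) - x (n + 1)
      else 0) :
    (∀ j ≤ n + 1, ∑ i ∈ Finset.Icc j (n + 1), a i ≤ ∑ i ∈ Finset.Icc j (n + 1), x i) ↔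
    (∀ j ≤ n, ∑ i ∈ Finset.Icc j n, m i ≤ ∑ i ∈ Finset.Icc j n, x i) := by
  obtain rfl : m = collapseTail a (k - 1) (n + 1) (x (n + 1)) := funext hm
  clear hm
  have head_iff (j : ℕ) (hj : j ≤ k - 1) :
      ∑ i ∈ Icc j (n + 1), a i ≤ ∑ i ∈ Icc j (n + 1), x i ↔
        ∑ i ∈ Icc j n, collapseTail a (k - 1) (n + 1) (x (n + 1)) i ≤ ∑ i ∈ Icc j n, x i := by
    rw [sum_Icc_collapseTail_of_le hj (by omega) (by omega),
      sum_Icc_eq_sum_Icc_succ_sub (f := x) (n := n) (by omega), sub_le_sub_iff_right]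
  constructor
  · intro h j hj
    rcases le_or_gt j (k - 1) with hjk | hkj
    · exact (head_iff j hjk).1 (h j (by omega))
    · rw [sum_collapseTail_eq_zero fun i hi ↦ hkj.trans_le (mem_Icc.1 hi).1]
      exact sum_nonneg fun i hi ↦ hx0 i (by grind)
  · intro h j hj
    rcases le_or_gt j (k - 1) with hjk | hkj
    · exact (head_iff j hjk).2 (h j (by omega))
    · exact sum_Icc_le_sum_Icc_of_sum_Icc_le_last ha0 hx0 (by omega) hj h1

/-- Dimension reduction for first order stochastic dominance. -/
theorem fosd_dim_reduction (n : ℕ) (u : ℝ) (hu : 0 < u) (a x : ℕ → ℝ)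
    (ha0 : ∀ i ≤ n + 1, 0 ≤ a i) (has : ∑ i ∈ Finset.range (n + 2), a i = u)
    (hx0 : ∀ i ≤ n + 1, 0 ≤ x i) (hxs : ∑ i ∈ Finset.range (n + 2), x i = u)
    (k : ℕ) (hk1 : 1 ≤ k) (hk2 : k ≤ n + 1)
    (h1 : ∑ i ∈ Finset.Icc k (n + 1), a i ≤ x (n + 1))
    (h2 : x (n + 1) < ∑ i ∈ Finset.Icc (k - 1) (n + 1), a i)
    (m : ℕ → ℝ)
    (hm : ∀ i, m i = if i < k - 1 then a i
      else if i = k - 1 then (∑ j ∈ Finset.Icc (k - 1) (n + 1), a j) - x (n + 1)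
      else 0) :
    (∀ j ≤ n + 1, ∑ i ∈ Finset.Icc j (n + 1), a i ≤ ∑ i ∈ Finset.Icc j (n + 1), x i) ↔
    (∀ j ≤ n, ∑ i ∈ Finset.Icc j n, m i ≤ ∑ i ∈ Finset.Icc j n, x i) :=
  fosd_dim_reduction_general n a x ha0 hx0 k hk2 h1 m hm
end

section
/- Let $a = (a_0,\ldots,a_{n+1}),\ x = (x_0,\ldots,x_{n+1}) \in \Delta^{n+1,u}$ with all $a_i > 0$ and $x_{n+1} < u$, and set $v = (a_0 + \cdots + a_n)/(u - x_{n+1})$. Then $a \le_r x$ in $\Delta^{n+1,u}$ if and only if $x_n a_{n+1} \le a_n x_{n+1}$ and $(a_0/v, \ldots, a_n/v) \le_r (x_0,\ldots,x_n)$ in $\Delta^{n,u-x_{n+1}}$. -/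
open Finset

/-- Dimension reduction for MLR dominance. -/
theorem mlr_dim_reduction (n : ℕ) (u : ℝ) (hu : 0 < u) (a x : ℕ → ℝ)
    (ha0 : ∀ i ≤ n + 1, 0 < a i) (has : ∑ i ∈ Finset.range (n + 2), a i = u)
    (hx0 : ∀ i ≤ n + 1, 0 ≤ x i) (hxs : ∑ i ∈ Finset.range (n + 2), x i = u)
    (hxn1 : x (n + 1) < u)
    (v : ℝ) (hv : v = (∑ i ∈ Finset.range (n + 1), a i) / (u - x (n + 1))) :
    (∀ i j, i < j → j ≤ n + 1 → x i * a j ≤ a i * x j) ↔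
      (x n * a (n + 1) ≤ a n * x (n + 1) ∧
        ∀ i j, i < j → j ≤ n → x i * (a j / v) ≤ (a i / v) * x j) := by
  have hvpos : 0 < v := by
    rw [hv]
    apply div_pos
    · exact Finset.sum_pos (fun i hi => ha0 i (by simp at hi; omega)) ⟨0, by simp⟩
    · linarith
  have key : ∀ p q : ℕ, (x p * (a q / v) ≤ (a p / v) * x q ↔ x p * a q ≤ a p * x q) := by
    intro p q
    rw [mul_div_assoc', div_mul_eq_mul_div, div_le_div_iff_of_pos_right hvpos]
  constructor
  · intro h
    exact ⟨h n (n+1) (by omega) le_rfl,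
      fun i j hij hj => (key i j).2 (h i j hij (by omega))⟩
  · rintro ⟨h1, h2⟩ i j hij hj
    rcases Nat.lt_or_ge j (n+1) with hjn | hjn
    · exact (key i j).1 (h2 i j hij (by omega))
    · have hj1 : j = n + 1 := by omega
      subst hj1
      rcases Nat.lt_or_ge i n with hin | hin
      · have h3 : x i * a n ≤ a i * x n := (key i n).1 (h2 i n hin le_rfl)
        have han : 0 < a n := ha0 n (by omega)
        have han1 : 0 < a (n+1) := ha0 (n+1) le_rfl
        have hai : 0 < a i := ha0 i (by omega)
        have hxi : 0 ≤ x i := hx0 i (by omega)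
        nlinarith [mul_le_mul_of_nonneg_right h3 han1.le,
          mul_le_mul_of_nonneg_left h1 hai.le]
      · have : i = n := by omega
        subst this; exact h1
end

section
/- For $n \ge 1$ and $u > 0$, $\int_0^u \int_0^{u-a_1} \cdots \int_0^{u - a_1 - \cdots - a_{n-1}} \prod_{i=1}^{n} \frac{a_i}{\sum_{j=i}^{n} a_j}\ da_n \cdots da_1 = \frac{u^n}{(n!)^2}$. -/
open MeasureTheory Finset

open scoped Nat

/-! Summing the integrand over the `n!` permutations of the coordinates gives `1` wherever all
coordinates are positive: `∏ aᵢ / (aᵢ + ⋯ + aₙ)` is the Plackett–Luce probability that drawing the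
indices without replacement, each time with probability proportional to the weights `a`, produces
them in the order `1, …, n`. Permuting the coordinates preserves Lebesgue measure and the simplex,
so every permuted integral equals the original one `I`; hence `n! · I` is the volume `uⁿ / n!` of
the simplex. -/

def simplex (ι : Type*) [Fintype ι] (u : ℝ) : Set (ι → ℝ) :=
  {a | (∀ i, 0 ≤ a i) ∧ ∑ i, a i ≤ u}

section Simplex

variable {ι : Type*} [Fintype ι]

theorem measurableSet_simplex (u : ℝ) : MeasurableSet (simplex ι u) :=
  (measurableSet_Ici (a := 0)).inter
    (measurableSet_le (measurable_sum _ fun i _ => measurable_pi_apply i) measurable_const)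

theorem simplex_eq_empty {u : ℝ} (hu : u < 0) : simplex ι u = ∅ :=
  Set.eq_empty_of_forall_notMem fun _ ha => hu.not_ge <| (sum_nonneg fun i _ => ha.1 i).trans ha.2

theorem comp_perm_mem_simplex_iff {u : ℝ} (σ : Equiv.Perm ι) {a : ι → ℝ} :
    a ∘ σ ∈ simplex ι u ↔ a ∈ simplex ι u := by
  simp only [simplex, Set.mem_ofPred_eq, Function.comp_apply]
  rw [σ.forall_congr_left, Equiv.sum_comp σ a]
  simp only [Equiv.apply_symm_apply]

theorem Fin.cons_mem_simplex_iff {n : ℕ} {u t : ℝ} {b : Fin n → ℝ} :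
    Fin.cons t b ∈ simplex (Fin (n + 1)) u ↔ 0 ≤ t ∧ b ∈ simplex (Fin n) (u - t) := by
  simp only [simplex, Set.mem_ofPred_eq, Fin.forall_fin_succ, Fin.sum_univ_succ, Fin.cons_zero,
    Fin.cons_succ, le_sub_iff_add_le']
  tauto

theorem simplex_subset_Icc {u : ℝ} : simplex ι u ⊆ Set.Icc 0 fun _ => u :=
  fun _ ha => ⟨ha.1, fun i => (single_le_sum (fun j _ => ha.1 j) (mem_univ i)).trans ha.2⟩

theorem volume_simplex_lt_top {u : ℝ} : volume (simplex ι u) < ⊤ :=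
  (measure_mono simplex_subset_Icc).trans_lt isCompact_Icc.measure_lt_top

theorem setIntegral_simplex_comp_perm {E : Type*} [NormedAddCommGroup E] [NormedSpace ℝ E]
    (u : ℝ) (σ : Equiv.Perm ι) (f : (ι → ℝ) → E) :
    ∫ a in simplex ι u, f (a ∘ σ) = ∫ a in simplex ι u, f a := by
  let e : (ι → ℝ) ≃ᵐ (ι → ℝ) := .arrowCongr' σ.symm (.refl ℝ)
  have he : MeasurePreserving e := volume_preserving_arrowCongr' _ _ (.id volume)
  have hpre : e ⁻¹' simplex ι u = simplex ι u := Set.ext fun _ => comp_perm_mem_simplex_iff σ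
  rw [← he.setIntegral_preimage_emb e.measurableEmbedding f, hpre]
  rfl

end Simplex

theorem integral_Icc_sub_pow_div_factorial (n : ℕ) {u : ℝ} (hu : 0 ≤ u) :
    ∫ t in Set.Icc 0 u, (u - t) ^ n / n ! = u ^ (n + 1) / (n + 1)! := by
  rw [integral_Icc_eq_integral_Ioc, ← intervalIntegral.integral_of_le hu,
    intervalIntegral.integral_div, intervalIntegral.integral_comp_sub_left (fun t => t ^ n),
    sub_self, sub_zero, integral_pow, Nat.factorial_succ]
  push_cast
  field_simp
  ring

theorem volume_simplex (n : ℕ) {u : ℝ} (hu : 0 ≤ u) :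
    volume (simplex (Fin n) u) = ENNReal.ofReal (u ^ n / n !) := by
  induction n generalizing u with
  | zero =>
    have huniv : simplex (Fin 0) u = Set.univ :=
      Set.eq_univ_of_forall fun a => by simp [simplex, hu]
    simp [huniv, volume_pi]
  | succ n ih =>
    let S := simplex (Fin (n + 1)) u
    let e := MeasurableEquiv.piFinSuccAbove (fun _ : Fin (n + 1) => ℝ) 0
    have hS : MeasurableSet (e.symm ⁻¹' S) := e.symm.measurable (measurableSet_simplex u)
    have hslice : ∀ t, volume (Prod.mk t ⁻¹' (e.symm ⁻¹' S)) =
        (Set.Icc 0 u).indicator (fun t => ENNReal.ofReal ((u - t) ^ n / n !)) t := by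
      intro t
      have hcons : Prod.mk t ⁻¹' (e.symm ⁻¹' S) = {b | 0 ≤ t ∧ b ∈ simplex (Fin n) (u - t)} :=
        Set.ext fun b => by
          simp only [e, Set.mem_preimage, MeasurableEquiv.piFinSuccAbove_symm_apply,
            Fin.insertNthEquiv_zero]
          exact Fin.cons_mem_simplex_iff
      by_cases ht : t ∈ Set.Icc 0 u
      · simp [hcons, ht.1, ih (sub_nonneg.2 ht.2), ht]
      · rw [Set.indicator_of_notMem ht, hcons]
        rcases not_and_or.1 ht with ht | ht
        · simp [ht]
        · simp [simplex_eq_empty (sub_neg.2 (not_le.1 ht))]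
    calc volume S = volume (e.symm ⁻¹' S) :=
          ((volume_preserving_piFinSuccAbove _ 0).symm.measure_preimage
            (measurableSet_simplex u).nullMeasurableSet).symm
      _ = ∫⁻ t in Set.Icc 0 u, ENNReal.ofReal ((u - t) ^ n / n !) := by
        rw [Measure.volume_eq_prod, Measure.prod_apply hS]
        simp_rw [hslice]
        exact lintegral_indicator measurableSet_Icc _
      _ = ENNReal.ofReal (u ^ (n + 1) / (n + 1)!) := by
        rw [← integral_Icc_sub_pow_div_factorial n hu, ofReal_integral_eq_lintegral_ofReal]
        · exact (continuous_const.sub continuous_id |>.pow n |>.div_const _).integrableOn_Icc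
        · filter_upwards [ae_restrict_mem measurableSet_Icc] with t ht
          exact div_nonneg (pow_nonneg (sub_nonneg.2 ht.2) n) (Nat.cast_nonneg _)

section PlackettLuce

variable {n : ℕ}

noncomputable def plackettLuce (a : Fin n → ℝ) : ℝ :=
  ∏ i, a i / ∑ j ∈ univ.filter (fun j => i ≤ j), a j

theorem plackettLuce_succ (a : Fin (n + 1) → ℝ) :
    plackettLuce a = a 0 / (∑ j, a j) * plackettLuce (Fin.tail a) := by
  have hhead : univ.filter (fun j : Fin (n + 1) => 0 ≤ j) = univ :=
    filter_true_of_mem fun j _ => Fin.zero_le j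
  have htail : ∀ i : Fin n, ∑ j ∈ univ.filter (fun j => i.succ ≤ j), a j =
      ∑ j ∈ univ.filter (fun j => i ≤ j), Fin.tail a j := by
    intro i
    simp [sum_filter, Fin.sum_univ_succ, Fin.succ_le_succ_iff, Fin.tail]
  simp only [plackettLuce, Fin.prod_univ_succ, hhead, htail, Fin.tail]

theorem plackettLuce_nonneg {a : Fin n → ℝ} (ha : 0 ≤ a) : 0 ≤ plackettLuce a :=
  prod_nonneg fun i _ => div_nonneg (ha i) (sum_nonneg fun j _ => ha j)

theorem plackettLuce_le_one {a : Fin n → ℝ} (ha : 0 ≤ a) : plackettLuce a ≤ 1 :=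
  prod_le_one (fun i _ => div_nonneg (ha i) (sum_nonneg fun j _ => ha j)) fun i _ =>
    div_le_one_of_le₀ (single_le_sum (fun j _ => ha j) (by simp)) (sum_nonneg fun j _ => ha j)

theorem measurable_plackettLuce : Measurable (plackettLuce (n := n)) :=
  measurable_prod _ fun i _ =>
    (measurable_pi_apply i).div (measurable_sum _ fun j _ => measurable_pi_apply j)

theorem sum_plackettLuce_comp_perm {a : Fin n → ℝ} (ha : ∀ i, 0 < a i) :
    ∑ σ : Equiv.Perm (Fin n), plackettLuce (a ∘ σ) = 1 := by
  induction n with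
  | zero => simp [plackettLuce]
  | succ n ih =>
    have htotal : 0 < ∑ j, a j := sum_pos (fun j _ => ha j) univ_nonempty
    have hstep : ∀ p τ, plackettLuce (a ∘ Equiv.Perm.decomposeFin.symm (p, τ)) =
        a p / (∑ j, a j) * plackettLuce ((fun k => a (Equiv.swap 0 p k.succ)) ∘ τ) := by
      intro p τ
      rw [plackettLuce_succ]
      congr 2
      · exact congrArg a (Equiv.Perm.decomposeFin_symm_apply_zero p τ)
      · exact Equiv.sum_comp _ a
      · exact funext fun k => congrArg a (Equiv.Perm.decomposeFin_symm_apply_succ τ p k)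
    rw [← Equiv.sum_comp Equiv.Perm.decomposeFin.symm, Fintype.sum_prod_type]
    simp only [hstep, ← mul_sum, ih fun k => ha _, mul_one, ← sum_div, div_self htotal.ne']

end PlackettLuce

theorem integrableOn_simplex_plackettLuce_comp_perm {n : ℕ} (u : ℝ) (σ : Equiv.Perm (Fin n)) :
    IntegrableOn (fun a => plackettLuce (a ∘ σ)) (simplex (Fin n) u) := by
  refine Measure.integrableOn_of_bounded (M := 1) volume_simplex_lt_top.ne
    (measurable_plackettLuce.comp (by fun_prop : Measurable fun a : Fin n → ℝ => a ∘ σ)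
      |>.aestronglyMeasurable) ?_
  filter_upwards [ae_restrict_mem (measurableSet_simplex u)] with a ha
  have ha' : 0 ≤ a ∘ σ := fun i => ha.1 (σ i)
  rw [Real.norm_of_nonneg (plackettLuce_nonneg ha')]
  exact plackettLuce_le_one ha'

theorem integral_prod_ratio_general (n : ℕ) (u : ℝ) (hu : 0 < u) :
    ∫ a in {a : Fin n → ℝ | (∀ i, 0 ≤ a i) ∧ ∑ i, a i ≤ u},
      (∏ i, a i / ∑ j ∈ Finset.univ.filter (fun j => i ≤ j), a j)
      = u ^ n / (n.factorial : ℝ) ^ 2 := by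
  change ∫ a in simplex (Fin n) u, plackettLuce a = _
  have hpos : ∀ᵐ a ∂volume.restrict (simplex (Fin n) u), ∀ i, 0 < a i := by
    filter_upwards [ae_restrict_of_ae (ae_all_iff.2 fun i => Measure.ae_eval_ne _ i 0),
      ae_restrict_mem (measurableSet_simplex u)] with a hne ha i
    exact (ha.1 i).lt_of_ne (hne i).symm
  have hsym : (n ! : ℝ) * ∫ a in simplex (Fin n) u, plackettLuce a = u ^ n / n ! := by
    calc (n ! : ℝ) * ∫ a in simplex (Fin n) u, plackettLuce a
        = ∑ σ : Equiv.Perm (Fin n), ∫ a in simplex (Fin n) u, plackettLuce (a ∘ σ) := by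
          simp [setIntegral_simplex_comp_perm, Fintype.card_perm]
      _ = ∫ a in simplex (Fin n) u, ∑ σ : Equiv.Perm (Fin n), plackettLuce (a ∘ σ) :=
          (integral_finsetSum _ fun σ _ => integrableOn_simplex_plackettLuce_comp_perm u σ).symm
      _ = volume.real (simplex (Fin n) u) := by
          rw [integral_congr_ae (hpos.mono fun a => sum_plackettLuce_comp_perm)]
          simp
      _ = u ^ n / n ! := by
          rw [measureReal_def, volume_simplex n hu.le, ENNReal.toReal_ofReal (by positivity)]
  rw [sq, ← div_div, ← hsym, mul_div_cancel_left₀ _ (by positivity)]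

theorem integral_prod_ratio (n : ℕ) (hn : 1 ≤ n) (u : ℝ) (hu : 0 < u) :
    ∫ a in {a : Fin n → ℝ | (∀ i, 0 ≤ a i) ∧ ∑ i, a i ≤ u},
      (∏ i, a i / ∑ j ∈ Finset.univ.filter (fun j => i ≤ j), a j)
      = u ^ n / (n.factorial : ℝ) ^ 2 :=
  integral_prod_ratio_general n u hu
end

section
/- For $n \ge 1$ and $u > 0$, $\int_0^u \int_0^{u-a_1} \cdots \int_0^{u - a_1 - \cdots - a_{n-1}} a_1 \prod_{i=2}^{n} \frac{a_i}{\sum_{j=i}^{n} a_j}\ da_n \cdots da_1 = \frac{u^{n+1}}{((n-1)!)^2\, n(n+1)}$. -/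
open MeasureTheory Finset

lemma filter_succ_sum {m : ℕ} (f : Fin (m+1) → ℝ) (i : Fin m) :
    ∑ j ∈ univ.filter (fun j => i.succ ≤ j), f j
      = ∑ j ∈ univ.filter (fun j => i ≤ j), f j.succ := by
  rw [sum_filter, sum_filter, Fin.sum_univ_succ]
  have h0 : ¬ (i.succ ≤ (0 : Fin (m+1))) := by
    simp [Fin.le_def, Fin.lt_def]
  simp [Fin.succ_le_succ_iff, h0]

lemma erase_zero_prod {m : ℕ} (f : Fin (m+1) → ℝ) :
    ∏ i ∈ univ.erase 0, f i = ∏ i : Fin m, f i.succ := by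
  have h : (univ.erase (0 : Fin (m+1))) = univ.map ⟨Fin.succ, Fin.succ_injective m⟩ := by
    ext j
    simp only [mem_erase, mem_univ, and_true, mem_map, Function.Embedding.coeFn_mk]
    constructor
    · intro hj
      obtain ⟨y, hy⟩ := Fin.exists_succ_eq.2 hj
      exact ⟨y, by simp, hy⟩
    · rintro ⟨y, -, rfl⟩
      exact Fin.succ_ne_zero y
  rw [h, prod_map]
  rfl

lemma measurableSet_simplex_s13 {m : ℕ} (v : ℝ) :
    MeasurableSet {a : Fin m → ℝ | (∀ i, 0 ≤ a i) ∧ ∑ i, a i ≤ v} := by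
  have h1 : MeasurableSet {a : Fin m → ℝ | ∀ i, 0 ≤ a i} := by
    rw [Set.setOf_forall]
    exact MeasurableSet.iInter fun i =>
      measurableSet_le measurable_const (measurable_pi_apply i)
  have h2 : MeasurableSet {a : Fin m → ℝ | ∑ i, a i ≤ v} :=
    measurableSet_le (Finset.measurable_sum _ fun i _ => measurable_pi_apply i)
      measurable_const
  exact h1.inter h2

lemma volume_coord_zero {m : ℕ} (i : Fin m) :
    volume {a : Fin m → ℝ | a i = 0} = 0 := by
  have h : {a : Fin m → ℝ | a i = 0}
      = Set.pi Set.univ (fun j => if j = i then ({0} : Set ℝ) else Set.univ) := by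
    ext a
    simp only [Set.mem_setOf_eq, Set.mem_univ_pi]
    constructor
    · intro h j
      split_ifs with hj
      · subst hj; simpa using h
      · trivial
    · intro h
      have := h i
      simpa using this
  rw [h, volume_pi_pi]
  apply Finset.prod_eq_zero (Finset.mem_univ i)
  simp

-- peel lemma
lemma lintegral_cons (m : ℕ) (F : (Fin (m+1) → ℝ) → ENNReal) (hF : Measurable F) :
    ∫⁻ a, F a = ∫⁻ x : ℝ, ∫⁻ y : Fin m → ℝ, F (Fin.cons x y) := by
  have h := (volume_preserving_piFinSuccAbove (fun _ : Fin (m+1) => ℝ) 0).symm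
  rw [← h.lintegral_comp hF]
  rw [MeasureTheory.Measure.volume_eq_prod,
    lintegral_prod (fun a => F ((MeasurableEquiv.piFinSuccAbove (fun _ : Fin (m+1) => ℝ) 0).symm a)) (hF.comp (MeasurableEquiv.piFinSuccAbove (fun _ : Fin (m+1) => ℝ) 0).symm.measurable).aemeasurable]
  congr 1
  ext x
  congr 1
  ext y
  congr 1
  simp [MeasurableEquiv.piFinSuccAbove_symm_apply, Fin.insertNth_zero']
  rfl

lemma lintegral_if_Icc (f : ℝ → ℝ) (hf : Continuous f) (v : ℝ) (hv : 0 ≤ v)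
    (hnn : ∀ x ∈ Set.Icc (0:ℝ) v, 0 ≤ f x) :
    ∫⁻ x : ℝ, (if 0 ≤ x ∧ x ≤ v then ENNReal.ofReal (f x) else 0)
      = ENNReal.ofReal (∫ x in (0:ℝ)..v, f x) := by
  have hset : (fun x => if 0 ≤ x ∧ x ≤ v then ENNReal.ofReal (f x) else 0)
      = Set.indicator (Set.Icc 0 v) (fun x => ENNReal.ofReal (f x)) := by
    funext x
    rw [Set.indicator_apply]
    simp [Set.mem_Icc]
  rw [hset, lintegral_indicator measurableSet_Icc]
  rw [← ofReal_integral_eq_lintegral_ofReal (hf.integrableOn_Icc)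
    ((ae_restrict_mem measurableSet_Icc).mono fun x hx => hnn x hx)]
  congr 1
  rw [intervalIntegral.integral_of_le hv, integral_Icc_eq_integral_Ioc]

lemma integral_sub_pow (v : ℝ) (hv : 0 ≤ v) (k : ℕ) :
    ∫ x in (0:ℝ)..v, (v - x) ^ k = v ^ (k+1) / (k+1) := by
  rw [intervalIntegral.integral_comp_sub_left (fun t => t ^ k) v]
  simp [integral_pow]

lemma cons_mem_simplex_iff {m : ℕ} {v x : ℝ} {y : Fin m → ℝ} :
    (Fin.cons x y ∈ {a : Fin (m+1) → ℝ | (∀ i, 0 ≤ a i) ∧ ∑ i, a i ≤ v}) ↔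
      (0 ≤ x ∧ y ∈ {b : Fin m → ℝ | (∀ i, 0 ≤ b i) ∧ ∑ i, b i ≤ v - x}) := by
  simp only [Set.mem_setOf_eq, Fin.forall_fin_succ, Fin.cons_zero, Fin.cons_succ,
    Fin.sum_univ_succ]
  constructor
  · rintro ⟨⟨h1, h2⟩, h3⟩
    exact ⟨h1, h2, by linarith⟩
  · rintro ⟨h1, h2, h3⟩
    exact ⟨⟨h1, h2⟩, by linarith⟩

lemma simplex_zero_volume (v : ℝ) (hv : 0 ≤ v) :
    volume {a : Fin 0 → ℝ | (∀ i, 0 ≤ a i) ∧ ∑ i, a i ≤ v} = 1 := by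
  have h : {a : Fin 0 → ℝ | (∀ i, 0 ≤ a i) ∧ ∑ i, a i ≤ v} = Set.univ := by
    ext a
    simp [hv]
  rw [h, volume_pi, Measure.pi_univ]
  simp

lemma volume_simplex_s13 (m : ℕ) : ∀ (v : ℝ), 0 ≤ v →
    volume {a : Fin m → ℝ | (∀ i, 0 ≤ a i) ∧ ∑ i, a i ≤ v}
      = ENNReal.ofReal (v ^ m / m.factorial) := by
  induction m with
  | zero => intro v hv; rw [simplex_zero_volume v hv]; simp
  | succ m ih =>
    intro v hv
    set S := {a : Fin (m+1) → ℝ | (∀ i, 0 ≤ a i) ∧ ∑ i, a i ≤ v} with hSdef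
    have hS : MeasurableSet S := measurableSet_simplex_s13 v
    have h1 : volume S = ∫⁻ a, S.indicator (fun _ => (1:ENNReal)) a := by
      rw [lintegral_indicator hS, setLIntegral_one]
    rw [h1, lintegral_cons _ _ (measurable_const.indicator hS)]
    have h2 : ∀ x : ℝ, (∫⁻ y : Fin m → ℝ, S.indicator (fun _ => (1:ENNReal)) (Fin.cons x y))
        = if 0 ≤ x ∧ x ≤ v then ENNReal.ofReal ((v - x) ^ m / m.factorial) else 0 := by
      intro x
      by_cases hx : 0 ≤ x ∧ x ≤ v
      · rw [if_pos hx]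
        have hxy : ∀ y : Fin m → ℝ, S.indicator (fun _ => (1:ENNReal)) (Fin.cons x y)
            = Set.indicator {b : Fin m → ℝ | (∀ i, 0 ≤ b i) ∧ ∑ i, b i ≤ v - x}
                (fun _ => 1) y := by
          intro y
          rw [Set.indicator_apply, Set.indicator_apply]
          simp only [hSdef, cons_mem_simplex_iff, hx.1, true_and]
        simp_rw [hxy]
        rw [lintegral_indicator (measurableSet_simplex_s13 _), setLIntegral_one,
          ih _ (by linarith [hx.2])]
      · rw [if_neg hx]
        have hxy : ∀ y : Fin m → ℝ, S.indicator (fun _ => (1:ENNReal)) (Fin.cons x y) = 0 := by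
          intro y
          apply Set.indicator_of_notMem
          rw [hSdef, cons_mem_simplex_iff]
          rintro ⟨h0, hy, hsum⟩
          have hys : 0 ≤ ∑ i, y i := Finset.sum_nonneg fun i _ => hy i
          push_neg at hx
          have := hx h0
          linarith
        simp_rw [hxy]
        simp
    simp_rw [h2]
    rw [lintegral_if_Icc (fun x => (v - x)^m / m.factorial) (by fun_prop) v hv
      (fun x hx => div_nonneg (pow_nonneg (by linarith [hx.2]) m) (by positivity))]
    congr 1
    rw [intervalIntegral.integral_div, integral_sub_pow v hv m]
    rw [Nat.factorial_succ]
    push_cast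
    field_simp
lemma perm_sum (m : ℕ) : ∀ (a : Fin m → ℝ), (∀ i, 0 < a i) →
    ∑ σ : Equiv.Perm (Fin m), ∏ i,
      a (σ i) / ∑ j ∈ univ.filter (fun j => i ≤ j), a (σ j) = 1 := by
  induction m with
  | zero =>
      intro a _
      simp [Finset.univ_unique]
  | succ m ih =>
      intro a ha
      have hS : 0 < ∑ j, a j := Finset.sum_pos (fun j _ => ha j) univ_nonempty
      rw [← Equiv.sum_comp Equiv.Perm.decomposeFin.symm]
      rw [Fintype.sum_prod_type]
      have key : ∀ (p : Fin (m+1)) (e : Equiv.Perm (Fin m)),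
          (∏ i, a (Equiv.Perm.decomposeFin.symm (p, e) i) /
            ∑ j ∈ univ.filter (fun j => i ≤ j), a (Equiv.Perm.decomposeFin.symm (p, e) j))
          = a p / (∑ j, a j) *
            ∏ i, (fun k : Fin m => a (Equiv.swap 0 p k.succ)) (e i) /
              ∑ j ∈ univ.filter (fun j => i ≤ j),
                (fun k : Fin m => a (Equiv.swap 0 p k.succ)) (e j) := by
        intro p e
        rw [Fin.prod_univ_succ]
        congr 1
        · rw [Equiv.Perm.decomposeFin_symm_apply_zero]
          congr 1
          rw [Finset.filter_true_of_mem (fun j _ => Fin.zero_le j)]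
          exact Equiv.sum_comp _ a
        · apply Finset.prod_congr rfl
          intro i _
          rw [Equiv.Perm.decomposeFin_symm_apply_succ]
          congr 1
          rw [filter_succ_sum (fun j => a (Equiv.Perm.decomposeFin.symm (p, e) j)) i]
          apply Finset.sum_congr rfl
          intro j _
          rw [Equiv.Perm.decomposeFin_symm_apply_succ]
      calc ∑ p : Fin (m+1), ∑ e : Equiv.Perm (Fin m),
            (∏ i, a (Equiv.Perm.decomposeFin.symm (p, e) i) /
              ∑ j ∈ univ.filter (fun j => i ≤ j), a (Equiv.Perm.decomposeFin.symm (p, e) j))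
          = ∑ p : Fin (m+1), a p / (∑ j, a j) := by
            apply Finset.sum_congr rfl
            intro p _
            rw [Finset.sum_congr rfl (fun e _ => key p e), ← Finset.mul_sum,
              ih (fun k => a (Equiv.swap 0 p k.succ)) (fun k => ha _), mul_one]
        _ = 1 := by rw [← Finset.sum_div, div_self hS.ne']

lemma lintegral_J (m : ℕ) (v : ℝ) (hv : 0 ≤ v) :
    ∫⁻ a in {a : Fin m → ℝ | (∀ i, 0 ≤ a i) ∧ ∑ i, a i ≤ v},
      ENNReal.ofReal (∏ i, a i / ∑ j ∈ univ.filter (fun j => i ≤ j), a j)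
      = ENNReal.ofReal (v ^ m / (m.factorial : ℝ) ^ 2) := by
  set S := {a : Fin m → ℝ | (∀ i, 0 ≤ a i) ∧ ∑ i, a i ≤ v} with hSdef
  have hS : MeasurableSet S := measurableSet_simplex_s13 v
  set g : Equiv.Perm (Fin m) → (Fin m → ℝ) → ℝ := fun σ a =>
    ∏ i, a (σ i) / ∑ j ∈ univ.filter (fun j => i ≤ j), a (σ j) with hgdef
  have hgmeas : ∀ σ, Measurable (fun a => ENNReal.ofReal (g σ a)) := by
    intro σ
    apply ENNReal.measurable_ofReal.comp
    apply Finset.measurable_prod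
    intro i _
    exact (measurable_pi_apply (σ i)).div
      (Finset.measurable_sum _ fun j _ => measurable_pi_apply (σ j))
  have hsym : ∀ σ : Equiv.Perm (Fin m),
      ∫⁻ a in S, ENNReal.ofReal (g σ a) = ∫⁻ a in S, ENNReal.ofReal (g 1 a) := by
    intro σ
    set T := MeasurableEquiv.arrowCongr' (σ.symm : Fin m ≃ Fin m) (MeasurableEquiv.refl ℝ)
      with hTdef
    have hTmp : MeasurePreserving T volume volume :=
      volume_preserving_arrowCongr' _ _ (MeasurePreserving.id _)
    have hTa : ∀ a : Fin m → ℝ, T a = a ∘ σ := fun a => rfl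
    have hgs : ∀ a : Fin m → ℝ, g 1 (a ∘ σ) = g σ a := by
      intro a
      simp [hgdef, Function.comp]
    have hpt : ∀ a : Fin m → ℝ, S.indicator (fun b => ENNReal.ofReal (g σ b)) a
        = S.indicator (fun b => ENNReal.ofReal (g 1 b)) (T a) := by
      intro a
      rw [hTa]
      have hmem : a ∘ σ ∈ S ↔ a ∈ S := by
        simp only [hSdef, Set.mem_setOf_eq, Function.comp]
        constructor
        · rintro ⟨h1, h2⟩
          refine ⟨fun i => ?_, ?_⟩
          · have := h1 (σ.symm i); simpa using this
          · rwa [Equiv.sum_comp σ a] at h2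
        · rintro ⟨h1, h2⟩
          exact ⟨fun i => h1 _, by rwa [Equiv.sum_comp σ a]⟩
      by_cases ha : a ∈ S
      · rw [Set.indicator_of_mem ha, Set.indicator_of_mem (hmem.mpr ha), hgs]
      · rw [Set.indicator_of_notMem ha,
          Set.indicator_of_notMem (fun h => ha (hmem.mp h))]
    rw [← lintegral_indicator hS, ← lintegral_indicator hS]
    calc ∫⁻ a, S.indicator (fun b => ENNReal.ofReal (g σ b)) a
        = ∫⁻ a, S.indicator (fun b => ENNReal.ofReal (g 1 b)) (T a) := lintegral_congr hpt
      _ = ∫⁻ a, S.indicator (fun b => ENNReal.ofReal (g 1 b)) a :=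
          hTmp.lintegral_comp ((hgmeas 1).indicator hS)
  have hsum : ∑ σ : Equiv.Perm (Fin m), ∫⁻ a in S, ENNReal.ofReal (g σ a)
      = ∫⁻ a in S, ∑ σ : Equiv.Perm (Fin m), ENNReal.ofReal (g σ a) :=
    (lintegral_finset_sum univ fun σ _ => hgmeas σ).symm
  have hae : ∫⁻ a in S, ∑ σ : Equiv.Perm (Fin m), ENNReal.ofReal (g σ a)
      = ENNReal.ofReal (v ^ m / m.factorial) := by
    have h0 : ∀ᵐ a ∂(volume : Measure (Fin m → ℝ)), ∀ i, a i ≠ 0 := by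
      rw [ae_iff]
      have hset : {a : Fin m → ℝ | ¬ ∀ i, a i ≠ 0} = ⋃ i, {a : Fin m → ℝ | a i = 0} := by
        ext a; simp
      rw [hset]
      exact measure_iUnion_null fun i => volume_coord_zero i
    have h0' : ∀ᵐ a ∂(volume.restrict S), ∀ i, a i ≠ 0 := ae_restrict_of_ae h0
    have heq : ∫⁻ a in S, ∑ σ : Equiv.Perm (Fin m), ENNReal.ofReal (g σ a)
        = ∫⁻ _ in S, (1 : ENNReal) := by
      apply lintegral_congr_ae
      filter_upwards [h0', ae_restrict_mem hS] with a hne hmem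
      have hpos : ∀ i, 0 < a i := fun i => lt_of_le_of_ne (hmem.1 i) (Ne.symm (hne i))
      rw [← ENNReal.ofReal_sum_of_nonneg (fun σ _ => Finset.prod_nonneg fun i _ =>
        div_nonneg (hpos (σ i)).le (Finset.sum_nonneg fun j _ => (hpos (σ j)).le))]
      rw [perm_sum m a hpos, ENNReal.ofReal_one]
    rw [heq, setLIntegral_one, volume_simplex_s13 m v hv]
  have hcard : ∑ σ : Equiv.Perm (Fin m), ∫⁻ a in S, ENNReal.ofReal (g σ a)
      = (m.factorial : ENNReal) * ∫⁻ a in S, ENNReal.ofReal (g 1 a) := by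
    rw [Finset.sum_congr rfl fun σ _ => hsym σ, Finset.sum_const, card_univ,
      Fintype.card_perm, Fintype.card_fin, nsmul_eq_mul]
  have hmain : (m.factorial : ENNReal) * ∫⁻ a in S, ENNReal.ofReal (g 1 a)
      = ENNReal.ofReal (v ^ m / m.factorial) := by
    rw [← hcard, hsum, hae]
  have hI : ∫⁻ a in S, ENNReal.ofReal (g 1 a)
      = ENNReal.ofReal (v ^ m / m.factorial) / (m.factorial : ENNReal) :=
    (ENNReal.eq_div_iff (by exact_mod_cast m.factorial_ne_zero) (by simp)).mpr hmain
  have hfinal : ENNReal.ofReal (v ^ m / (m.factorial : ℝ) ^ 2)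
      = ENNReal.ofReal (v ^ m / m.factorial) / (m.factorial : ENNReal) := by
    rw [sq, ← div_div, ENNReal.ofReal_div_of_pos (by exact_mod_cast m.factorial_pos),
      ENNReal.ofReal_natCast]
  have hg1 : ∀ a : Fin m → ℝ, g 1 a
      = ∏ i, a i / ∑ j ∈ univ.filter (fun j => i ≤ j), a j := by
    intro a; simp [hgdef]
  simp_rw [← hg1]
  rw [hI, hfinal]

theorem integral_first_coord_prod_ratio (n : ℕ) (hn : 1 ≤ n) (u : ℝ) (hu : 0 < u) :
    ∫ a in {a : Fin n → ℝ | (∀ i, 0 ≤ a i) ∧ ∑ i, a i ≤ u},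
      (a ⟨0, by omega⟩ *
        ∏ i ∈ Finset.univ.erase ⟨0, by omega⟩,
          a i / ∑ j ∈ Finset.univ.filter (fun j => i ≤ j), a j)
      = u ^ (n + 1) / (((n - 1).factorial : ℝ) ^ 2 * n * (n + 1)) := by
  obtain ⟨m, rfl⟩ : ∃ m, n = m + 1 := ⟨n - 1, by omega⟩
  have hz : (⟨0, by omega⟩ : Fin (m+1)) = 0 := rfl
  rw [hz]
  set S := {a : Fin (m+1) → ℝ | (∀ i, 0 ≤ a i) ∧ ∑ i, a i ≤ u} with hSdef
  have hS : MeasurableSet S := measurableSet_simplex_s13 u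
  set F : (Fin (m+1) → ℝ) → ℝ := fun a =>
    a 0 * ∏ i ∈ Finset.univ.erase 0, a i / ∑ j ∈ Finset.univ.filter (fun j => i ≤ j), a j
    with hFdef
  have hFmeas : Measurable F := by
    apply Measurable.mul (measurable_pi_apply 0)
    apply Finset.measurable_prod
    intro i _
    exact (measurable_pi_apply i).div
      (Finset.measurable_sum _ fun j _ => measurable_pi_apply j)
  have hFnn : 0 ≤ᵐ[volume.restrict S] F := by
    filter_upwards [ae_restrict_mem hS] with a ha
    exact mul_nonneg (ha.1 0) (Finset.prod_nonneg fun i _ =>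
      div_nonneg (ha.1 i) (Finset.sum_nonneg fun j _ => ha.1 j))
  rw [integral_eq_lintegral_of_nonneg_ae hFnn hFmeas.aestronglyMeasurable]
  set C : ℝ := ((m.factorial : ℝ))^2 with hCdef
  have hC : 0 < C := by positivity
  -- cons evaluation of F
  have hFcons : ∀ (x : ℝ) (y : Fin m → ℝ), F (Fin.cons x y)
      = x * ∏ i, y i / ∑ j ∈ Finset.univ.filter (fun j => i ≤ j), y j := by
    intro x y
    set c : Fin (m+1) → ℝ := Fin.cons x y with hcdef
    rw [hFdef]
    have hc0 : c 0 = x := rfl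
    simp only [hc0]
    congr 1
    rw [erase_zero_prod (fun i => c i / ∑ j ∈ Finset.univ.filter (fun j => i ≤ j), c j)]
    apply Finset.prod_congr rfl
    intro i _
    have hcs : ∀ i : Fin m, c i.succ = y i := fun i => rfl
    rw [hcs, filter_succ_sum c i]
    simp only [hcs]
  -- lintegral computation
  have hL : ∫⁻ a in S, ENNReal.ofReal (F a)
      = ENNReal.ofReal (u ^ (m+2) / (C * (m+1) * (m+2))) := by
    rw [← lintegral_indicator hS, lintegral_cons m (S.indicator fun a => ENNReal.ofReal (F a))
      (Measurable.indicator (ENNReal.measurable_ofReal.comp hFmeas) hS)]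
    have hinner : ∀ x : ℝ, (∫⁻ y : Fin m → ℝ,
          S.indicator (fun a => ENNReal.ofReal (F a)) (Fin.cons x y))
        = if 0 ≤ x ∧ x ≤ u then ENNReal.ofReal (x * ((u - x) ^ m / C)) else 0 := by
      intro x
      by_cases hx : 0 ≤ x ∧ x ≤ u
      · rw [if_pos hx]
        have hpt : ∀ y : Fin m → ℝ, S.indicator (fun a => ENNReal.ofReal (F a)) (Fin.cons x y)
            = ENNReal.ofReal x * Set.indicator {b : Fin m → ℝ | (∀ i, 0 ≤ b i) ∧ ∑ i, b i ≤ u - x}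
                (fun y => ENNReal.ofReal (∏ i, y i / ∑ j ∈ Finset.univ.filter (fun j => i ≤ j), y j)) y := by
          intro y
          rw [Set.indicator_apply, Set.indicator_apply]
          by_cases hy : y ∈ {b : Fin m → ℝ | (∀ i, 0 ≤ b i) ∧ ∑ i, b i ≤ u - x}
          · rw [if_pos hy, if_pos (cons_mem_simplex_iff.mpr ⟨hx.1, hy⟩), hFcons,
              ENNReal.ofReal_mul hx.1]
          · rw [if_neg hy, if_neg (fun h => hy (cons_mem_simplex_iff.mp h).2), mul_zero]
        simp_rw [hpt]
        have hmeasY : Measurable (fun y : Fin m → ℝ =>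
            ENNReal.ofReal (∏ i, y i / ∑ j ∈ Finset.univ.filter (fun j => i ≤ j), y j)) := by
          apply ENNReal.measurable_ofReal.comp
          apply Finset.measurable_prod
          intro i _
          exact (measurable_pi_apply i).div
            (Finset.measurable_sum _ fun j _ => measurable_pi_apply j)
        rw [lintegral_const_mul (ENNReal.ofReal x) (hmeasY.indicator (measurableSet_simplex_s13 _))]
        rw [lintegral_indicator (measurableSet_simplex_s13 _), lintegral_J m (u - x) (by linarith [hx.2])]
        rw [← ENNReal.ofReal_mul hx.1]
      · rw [if_neg hx]
        have hpt : ∀ y : Fin m → ℝ, S.indicator (fun a => ENNReal.ofReal (F a)) (Fin.cons x y) = 0 := by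
          intro y
          apply Set.indicator_of_notMem
          rw [hSdef, cons_mem_simplex_iff]
          rintro ⟨h0, hy, hsum⟩
          have hys : 0 ≤ ∑ i, y i := Finset.sum_nonneg fun i _ => hy i
          push_neg at hx
          have := hx h0
          linarith
        simp_rw [hpt]
        simp
    simp_rw [hinner]
    rw [lintegral_if_Icc (fun x => x * ((u - x) ^ m / C)) (by fun_prop) u hu.le
      (fun x hx => mul_nonneg hx.1 (div_nonneg (pow_nonneg (by linarith [hx.2]) m) hC.le))]
    congr 1
    have hsplit : ∀ x : ℝ, x * ((u - x) ^ m / C) = (u * (u - x) ^ m - (u - x) ^ (m+1)) / C := by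
      intro x; field_simp; ring
    rw [intervalIntegral.integral_congr (fun x _ => hsplit x)]
    rw [intervalIntegral.integral_div]
    have h1 : IntervalIntegrable (fun x : ℝ => u * (u - x) ^ m) volume 0 u :=
      (by fun_prop : Continuous fun x : ℝ => u * (u - x) ^ m).intervalIntegrable _ _
    have h2 : IntervalIntegrable (fun x : ℝ => (u - x) ^ (m+1)) volume 0 u :=
      (by fun_prop : Continuous fun x : ℝ => (u - x) ^ (m+1)).intervalIntegrable _ _
    rw [intervalIntegral.integral_sub h1 h2]
    rw [intervalIntegral.integral_const_mul, integral_sub_pow u hu.le m,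
      integral_sub_pow u hu.le (m+1)]
    rw [div_eq_div_iff (by positivity) (by positivity)]
    push_cast
    field_simp
    ring
  rw [hL, ENNReal.toReal_ofReal (by positivity)]
  have hfac : ((m + 1 - 1).factorial : ℝ) = (m.factorial : ℝ) := by norm_num
  rw [hfac]
  push_cast
  ring
end

section
/- Let $n \ge 1$ and let $X_1, X_2$ be independent random variables, each uniformly distributed on $\Delta^{n,u}$. Then the probability that $X_1$ and $X_2$ are comparable with respect to first order stochastic dominance (i.e., $X_1 \le_s X_2$ or $X_2 \le_s X_1$) equals $\frac{2}{n+1}$. -/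
/-!
Put `D = X₂ - X₁`. Then `X₁ ≤_s X₂` says that every tail sum `∑_{i ≥ k} D i` is nonnegative,
`D` sums to `0`, and the law of `D` is invariant under the cyclic rotations of the coordinates.
By the cycle lemma, exactly one of the `n + 1` rotations of `D` has all its tail sums
nonnegative, as soon as no tail sum of any rotation vanishes; this holds almost surely because
the uniform measure on the simplex charges no slice `{x | ∑_{i ≥ k} x i = c}`, `k ≠ 0`.
Averaging over the rotations gives `P(X₁ ≤_s X₂) = 1/(n + 1)`, likewise for `X₂ ≤_s X₁`, and
both happen only on a null set of ties.
-/

open MeasureTheory Finset ENNReal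

namespace StochasticDominance

open Module ProbabilityTheory

local notation "𝔼" n:max => EuclideanSpace ℝ (Fin (n + 1))

lemma addHaar_levelSet_eq_zero {F : Type*} [NormedAddCommGroup F] [NormedSpace ℝ F]
    [MeasurableSpace F] [BorelSpace F] [FiniteDimensional ℝ F] (μ : Measure F)
    [μ.IsAddHaarMeasure] {g : F →ₗ[ℝ] ℝ} (hg : g ≠ 0) (c : ℝ) : μ {v | g v = c} = 0 := by
  obtain ⟨v₀, rfl⟩ := LinearMap.surjective hg c
  have : {v | g v = g v₀} = (· + -v₀) ⁻¹' (LinearMap.ker g : Set F) := by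
    ext v
    simp [sub_eq_zero, ← sub_eq_add_neg]
  rw [this, measure_preimage_add_right]
  exact Measure.addHaar_submodule μ _ (LinearMap.ker_eq_top.not.2 hg)

lemma measurePreserving_cond {α : Type*} [MeasurableSpace α] {μ : Measure α} {f : α → α}
    {s : Set α} (hf : MeasurePreserving f μ μ) (hs : MeasurableSet s) (hfs : f ⁻¹' s = s) :
    MeasurePreserving f μ[|s] μ[|s] := by
  have h := hf.restrict_preimage hs
  rw [hfs] at h
  exact ⟨hf.measurable, by rw [ProbabilityTheory.cond, Measure.map_smul, h.map_eq]⟩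

variable {n : ℕ}

noncomputable def tailSum (k : Fin (n + 1)) : 𝔼 n →ₗ[ℝ] ℝ where
  toFun x := ∑ i ∈ univ.filter (k ≤ ·), x i
  map_add' x y := by simp [sum_add_distrib]
  map_smul' c x := by simp [mul_sum]

lemma tailSum_apply (k : Fin (n + 1)) (x : 𝔼 n) :
    tailSum k x = ∑ i ∈ univ.filter (k ≤ ·), x i := rfl

lemma tailSum_zero_apply (x : 𝔼 n) : tailSum 0 x = ∑ i, x i := by
  simp [tailSum_apply]

lemma tailSum_succ_apply (x : 𝔼 n) (k : Fin n) :
    tailSum k.succ x = tailSum k.castSucc x - x k.castSucc := by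
  simp only [tailSum_apply, filter_le_eq_Ici]
  rw [← Fin.coeSucc_eq_succ, Fin.Ici_add_one_eq_Ioi (by simp), ← Ici_erase,
    sum_erase_eq_sub (by simp)]

lemma tailSum_single (k j : Fin (n + 1)) (a : ℝ) :
    tailSum k (EuclideanSpace.single j a) = if k ≤ j then a else 0 := by
  simp [tailSum_apply, PiLp.single_apply]

lemma continuous_tailSum (k : Fin (n + 1)) : Continuous (tailSum k) :=
  (tailSum k).continuous_of_finiteDimensional

lemma measurableSet_tailSum_eq (k : Fin (n + 1)) (c : ℝ) :
    MeasurableSet {x : 𝔼 n | tailSum k x = c} :=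
  (isClosed_eq (continuous_tailSum k) continuous_const).measurableSet

lemma measurableSet_forall_tailSum_nonneg : MeasurableSet {x : 𝔼 n | ∀ k, 0 ≤ tailSum k x} := by
  simp only [Set.ofPred_forall]
  exact (isClosed_iInter fun k => isClosed_le continuous_const (continuous_tailSum k)).measurableSet

noncomputable def rotate (t : Fin (n + 1)) : 𝔼 n ≃ₗᵢ[ℝ] 𝔼 n :=
  LinearIsometryEquiv.piLpCongrLeft 2 ℝ ℝ (Equiv.subRight t)

lemma rotate_apply (t : Fin (n + 1)) (x : 𝔼 n) (i : Fin (n + 1)) :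
    rotate t x i = x (i + t) := by
  simp [rotate, LinearIsometryEquiv.piLpCongrLeft_apply, Equiv.piCongrLeft'_apply]

lemma tailSum_zero_rotate (t : Fin (n + 1)) (x : 𝔼 n) :
    tailSum 0 (rotate t x) = tailSum 0 x := by
  simp only [tailSum_zero_apply, rotate_apply]
  exact Equiv.sum_comp (Equiv.addRight t) (fun i => x i)

noncomputable def cyclicPrefixSum (x : 𝔼 n) (j : Fin (n + 1)) : ℝ :=
  ∑ i ∈ Iio j, x i

/-- At `j = last n` the index wraps around to `0`; the identity survives because `x` sums
to `0`. -/
lemma cyclicPrefixSum_add_one {x : 𝔼 n} (hx : tailSum 0 x = 0) (j : Fin (n + 1)) :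
    cyclicPrefixSum x (j + 1) = cyclicPrefixSum x j + x j := by
  rw [tailSum_zero_apply] at hx
  induction j using Fin.lastCases with
  | last =>
    rw [Fin.last_add_one, cyclicPrefixSum, cyclicPrefixSum, Fin.Iio_last_eq_map, sum_map]
    simpa [Fin.sum_univ_castSucc, Iio_eq_empty, isMin_iff_eq_bot, _root_.bot_eq_zero]
      using hx.symm
  | cast i =>
    rw [cyclicPrefixSum, cyclicPrefixSum, Fin.Iio_add_one_eq_Iic (by simp), Iic_eq_cons_Iio,
      sum_cons, add_comm]

lemma tailSum_rotate {x : 𝔼 n} (hx : tailSum 0 x = 0) (t k : Fin (n + 1)) :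
    tailSum k (rotate t x) = cyclicPrefixSum x t - cyclicPrefixSum x (t + k) := by
  induction k using Fin.induction with
  | zero => rw [tailSum_zero_rotate, hx, add_zero, sub_self]
  | succ k ih =>
    rw [tailSum_succ_apply, ih, rotate_apply, ← Fin.coeSucc_eq_succ, ← add_assoc,
      cyclicPrefixSum_add_one hx, add_comm k.castSucc t]
    ring

/-- The cycle lemma: the good rotations are the maximizers of the cyclic prefix sums, and the
absence of ties makes the maximizer unique. -/
theorem existsUnique_rotate_tailSum_nonneg {x : 𝔼 n} (hx : tailSum 0 x = 0)
    (hties : ∀ t k, k ≠ 0 → tailSum k (rotate t x) ≠ 0) :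
    ∃! t, ∀ k, 0 ≤ tailSum k (rotate t x) := by
  simp only [tailSum_rotate hx, sub_nonneg, ne_eq, sub_eq_zero] at hties ⊢
  obtain ⟨t, ht⟩ := Finite.exists_max (cyclicPrefixSum x)
  refine ⟨t, fun k => ht _, fun s hs => ?_⟩
  by_contra hne
  have hst := hs (t - s)
  rw [add_sub_cancel] at hst
  exact hties s (t - s) (sub_ne_zero.2 (Ne.symm hne)) (by rw [add_sub_cancel]; linarith [ht s])

/-- Almost surely exactly one rotation has nonnegative tail sums, so the `n + 1` rotated
copies of the event add up to `1`. -/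
theorem measure_forall_tailSum_nonneg (ν : Measure (𝔼 n)) [IsProbabilityMeasure ν]
    (hrot : ∀ t, MeasurePreserving (rotate t) ν ν) (hsum : ∀ᵐ x ∂ν, tailSum 0 x = 0)
    (hties : ∀ k, k ≠ 0 → ν {x | tailSum k x = 0} = 0) :
    ν {x | ∀ k, 0 ≤ tailSum k x} = ((n : ℝ≥0∞) + 1)⁻¹ := by
  set A := {x : 𝔼 n | ∀ k, 0 ≤ tailSum k x}
  have hA : MeasurableSet A := measurableSet_forall_tailSum_nonneg
  have hA_rot : ∀ t, MeasurableSet (rotate t ⁻¹' A) := fun t =>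
    hA.preimage (rotate t).continuous.measurable
  have hnoties : ∀ᵐ x ∂ν, ∀ t k, k ≠ 0 → tailSum k (rotate t x) ≠ 0 := by
    refine ae_all_iff.2 fun t => ae_all_iff.2 fun k => ?_
    by_cases hk : k = 0
    · exact ae_of_all _ fun _ h => absurd hk h
    have hnull : ν (rotate t ⁻¹' {x | tailSum k x = 0}) = 0 := by
      rw [(hrot t).measure_preimage (measurableSet_tailSum_eq k 0).nullMeasurableSet]
      exact hties k hk
    filter_upwards [measure_eq_zero_iff_ae_notMem.1 hnull] with x hx _ using hx
  have hcount : ∀ᵐ x ∂ν, ∑ t, (rotate t ⁻¹' A).indicator 1 x = (1 : ℝ≥0∞) := by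
    filter_upwards [hsum, hnoties] with x hx hx'
    obtain ⟨t₀, ht₀, huniq⟩ := existsUnique_rotate_tailSum_nonneg hx hx'
    rw [sum_eq_single t₀
      (fun t _ ht => Set.indicator_of_notMem (s := rotate t ⁻¹' A) (fun h => ht (huniq t h)) _)
      (fun h => absurd (mem_univ t₀) h)]
    exact Set.indicator_of_mem (s := rotate t₀ ⁻¹' A) ht₀ _
  apply ENNReal.eq_inv_of_mul_eq_one_left
  calc ν A * ((n : ℝ≥0∞) + 1) = ∑ t : Fin (n + 1), ν (rotate t ⁻¹' A) := by
        simp [(hrot _).measure_preimage hA.nullMeasurableSet, mul_comm]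
    _ = ∫⁻ x, ∑ t, (rotate t ⁻¹' A).indicator 1 x ∂ν := by
        rw [lintegral_finsetSum _ fun t _ => measurable_one.indicator (hA_rot t)]
        simp [lintegral_indicator_one (hA_rot _)]
    _ = 1 := by rw [lintegral_congr_ae hcount, lintegral_one, measure_univ]

lemma measure_prod_tailSum_eq_eq_zero (μ : Measure (𝔼 n)) [SFinite μ] {k : Fin (n + 1)}
    (hlevel : ∀ c, μ {x | tailSum k x = c} = 0) :
    (μ.prod μ) {p | tailSum k p.2 = tailSum k p.1} = 0 := by
  have hmeas : MeasurableSet {p : 𝔼 n × 𝔼 n | tailSum k p.2 = tailSum k p.1} :=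
    measurableSet_eq_fun ((continuous_tailSum k).comp continuous_snd).measurable
      ((continuous_tailSum k).comp continuous_fst).measurable
  rw [Measure.prod_apply hmeas]
  simp only [Set.preimage, Set.mem_ofPred_eq, hlevel, lintegral_zero]

lemma preimage_sub_forall_tailSum_nonneg :
    (fun p : 𝔼 n × 𝔼 n => p.2 - p.1) ⁻¹' {x | ∀ k, 0 ≤ tailSum k x} =
      {p | ∀ k, tailSum k p.1 ≤ tailSum k p.2} := by
  ext p
  simp [sub_nonneg]

theorem measure_prod_forall_tailSum_le (μ : Measure (𝔼 n)) [IsProbabilityMeasure μ] {u : ℝ}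
    (hrot : ∀ t, MeasurePreserving (rotate t) μ μ) (hsum : ∀ᵐ x ∂μ, tailSum 0 x = u)
    (hlevel : ∀ k, k ≠ 0 → ∀ c, μ {x | tailSum k x = c} = 0) :
    (μ.prod μ) {p | ∀ k, tailSum k p.1 ≤ tailSum k p.2} = ((n : ℝ≥0∞) + 1)⁻¹ := by
  set d : 𝔼 n × 𝔼 n → 𝔼 n := fun p => p.2 - p.1
  have hd : Measurable d := (continuous_snd.sub continuous_fst).measurable
  have := Measure.isProbabilityMeasure_map (μ := μ.prod μ) hd.aemeasurable
  rw [← preimage_sub_forall_tailSum_nonneg,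
    ← Measure.map_apply hd measurableSet_forall_tailSum_nonneg]
  refine measure_forall_tailSum_nonneg _ (fun t => ⟨(rotate t).continuous.measurable, ?_⟩) ?_ ?_
  · have hrot_meas := (rotate t).continuous.measurable
    have hcomm : rotate t ∘ d = d ∘ Prod.map (rotate t) (rotate t) := by
      funext p
      exact map_sub (rotate t) p.2 p.1
    rw [Measure.map_map hrot_meas hd, hcomm, ← Measure.map_map hd (hrot_meas.prodMap hrot_meas),
      ((hrot t).prod (hrot t)).map_eq]
  · rw [ae_map_iff hd.aemeasurable (measurableSet_tailSum_eq 0 0)]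
    filter_upwards [Measure.quasiMeasurePreserving_fst.ae hsum,
      Measure.quasiMeasurePreserving_snd.ae hsum] with p h₁ h₂
    simp [d, h₁, h₂]
  · intro k hk
    rw [Measure.map_apply hd (measurableSet_tailSum_eq k 0)]
    refine measure_mono_null (fun p hp => ?_) (measure_prod_tailSum_eq_eq_zero μ (hlevel k hk))
    have hp : tailSum k (p.2 - p.1) = 0 := hp
    rwa [map_sub, sub_eq_zero] at hp

theorem measure_prod_comparable (hn : 1 ≤ n) (μ : Measure (𝔼 n)) [IsProbabilityMeasure μ]
    {u : ℝ} (hrot : ∀ t, MeasurePreserving (rotate t) μ μ) (hsum : ∀ᵐ x ∂μ, tailSum 0 x = u)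
    (hlevel : ∀ k, k ≠ 0 → ∀ c, μ {x | tailSum k x = c} = 0) :
    (μ.prod μ) {p | (∀ k, tailSum k p.1 ≤ tailSum k p.2) ∨ (∀ k, tailSum k p.2 ≤ tailSum k p.1)} =
      2 / ((n : ℝ≥0∞) + 1) := by
  have hA : MeasurableSet {p : 𝔼 n × 𝔼 n | ∀ k, tailSum k p.1 ≤ tailSum k p.2} := by
    rw [← preimage_sub_forall_tailSum_nonneg]
    exact measurableSet_forall_tailSum_nonneg.preimage
      (continuous_snd.sub continuous_fst).measurable
  set A := {p : 𝔼 n × 𝔼 n | ∀ k, tailSum k p.1 ≤ tailSum k p.2}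
  have hA₁ : (μ.prod μ) A = ((n : ℝ≥0∞) + 1)⁻¹ :=
    measure_prod_forall_tailSum_le μ hrot hsum hlevel
  have hA₂ : (μ.prod μ) (Prod.swap ⁻¹' A) = ((n : ℝ≥0∞) + 1)⁻¹ := by
    rw [Measure.measurePreserving_swap.measure_preimage hA.nullMeasurableSet, hA₁]
  have hk : (⟨1, by omega⟩ : Fin (n + 1)) ≠ 0 := Fin.ne_of_val_ne one_ne_zero
  have hA₁₂ : (μ.prod μ) (A ∩ Prod.swap ⁻¹' A) = 0 :=
    measure_mono_null (fun p hp => le_antisymm (hp.2 _) (hp.1 _))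
      (measure_prod_tailSum_eq_eq_zero μ (hlevel _ hk))
  have hunion := measure_union_add_inter A (hA.preimage measurable_swap) (μ := μ.prod μ)
  rw [hA₁₂, add_zero, hA₁, hA₂] at hunion
  change (μ.prod μ) (A ∪ Prod.swap ⁻¹' A) = _
  rw [hunion, ENNReal.div_eq_inv_mul, mul_two]

local notation "𝔼₀" n:max => LinearMap.ker (tailSum (0 : Fin (n + 1)))

lemma tailSum_zero_ne_zero : tailSum (0 : Fin (n + 1)) ≠ 0 := fun h => by
  simpa [tailSum_single] using LinearMap.congr_fun h (EuclideanSpace.single 0 1)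

lemma finrank_ker_tailSum_zero : finrank ℝ (𝔼₀ n) = n := by
  have := Module.Dual.finrank_ker_add_one_of_ne_zero (tailSum_zero_ne_zero (n := n))
  rw [finrank_euclideanSpace_fin] at this
  omega

instance : (μH[(n : ℝ)] : Measure (𝔼₀ n)).IsAddHaarMeasure := by
  have := isAddHaarMeasure_hausdorffMeasure (E := 𝔼₀ n)
  rwa [finrank_ker_tailSum_zero] at this

/-- An isometric parametrisation of the hyperplane `{x | ∑ i, x i = u}` by the `n`-dimensional
space `ker (tailSum 0)`, on which `μH[n]` is a Haar measure. -/
noncomputable def hyperplaneParam (u : ℝ) (v : 𝔼₀ n) : 𝔼 n :=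
  EuclideanSpace.single 0 u + (v : 𝔼 n)

lemma isometry_hyperplaneParam (u : ℝ) : Isometry (hyperplaneParam (n := n) u) :=
  (IsometryEquiv.addLeft _).isometry.comp isometry_subtype_coe

lemma tailSum_zero_hyperplaneParam (u : ℝ) (v : 𝔼₀ n) :
    tailSum 0 (hyperplaneParam u v) = u := by
  simp [hyperplaneParam, tailSum_single]

lemma hausdorffMeasure_preimage_hyperplaneParam {u : ℝ} {s : Set (𝔼 n)}
    (hs : ∀ x ∈ s, tailSum 0 x = u) :
    μH[(n : ℝ)] (hyperplaneParam u ⁻¹' s) = μH[(n : ℝ)] s := by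
  have hrange : s ⊆ Set.range (hyperplaneParam u) := fun x hx =>
    ⟨⟨x - EuclideanSpace.single 0 u, by simp [map_sub, tailSum_single, hs x hx]⟩,
      add_sub_cancel _ x⟩
  rw [← (isometry_hyperplaneParam u).hausdorffMeasure_image (.inl n.cast_nonneg),
    Set.image_preimage_eq_of_subset hrange]

def simplex (n : ℕ) (u : ℝ) : Set (𝔼 n) := {x | (∀ i, 0 ≤ x i) ∧ ∑ i, x i = u}

lemma tailSum_zero_of_mem_simplex {u : ℝ} {x : 𝔼 n} (hx : x ∈ simplex n u) :
    tailSum 0 x = u := by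
  rw [tailSum_zero_apply, hx.2]

lemma isClosed_simplex (n : ℕ) (u : ℝ) : IsClosed (simplex n u) := by
  simp only [simplex, Set.ofPred_and, Set.ofPred_forall]
  exact (isClosed_iInter fun i => isClosed_le continuous_const (PiLp.continuous_apply 2 _ i)).inter
    (isClosed_eq (continuous_finsetSum _ fun i _ => PiLp.continuous_apply 2 _ i) continuous_const)

lemma isCompact_simplex (n : ℕ) (u : ℝ) : IsCompact (simplex n u) := by
  refine ((isCompact_Icc (a := 0) (b := fun _ => u)).image (PiLp.continuous_toLp 2 _))
    |>.of_isClosed_subset (isClosed_simplex n u) fun x hx => ⟨x.ofLp, ⟨hx.1, fun i => ?_⟩, rfl⟩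
  exact hx.2 ▸ single_le_sum (fun j _ => hx.1 j) (mem_univ i)

lemma rotate_preimage_simplex (t : Fin (n + 1)) (u : ℝ) :
    rotate t ⁻¹' simplex n u = simplex n u := by
  ext x
  simp only [simplex, Set.mem_preimage, Set.mem_ofPred_eq, ← tailSum_zero_apply,
    tailSum_zero_rotate, rotate_apply]
  exact and_congr_left' (Equiv.forall_congr_right (q := fun i => 0 ≤ x i) (Equiv.addRight t))

/-- The centroid lies in the relative interior of the simplex. -/
lemma hausdorffMeasure_simplex_ne_zero {u : ℝ} (hu : 0 < u) :
    μH[(n : ℝ)] (simplex n u) ≠ 0 := by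
  rw [← hausdorffMeasure_preimage_hyperplaneParam fun x => tailSum_zero_of_mem_simplex]
  set P := {x : 𝔼 n | ∀ i, 0 < x i}
  have hP : IsOpen (hyperplaneParam u ⁻¹' P) := by
    simp only [P, Set.ofPred_forall]
    exact (isOpen_iInter_of_finite fun i => isOpen_lt continuous_const
      (PiLp.continuous_apply 2 _ i)).preimage (isometry_hyperplaneParam u).continuous
  have hcentroid : WithLp.toLp 2 (fun _ => u / (n + 1)) - EuclideanSpace.single 0 u ∈ 𝔼₀ n := by
    simp [map_sub, tailSum_zero_apply, tailSum_single]
    field_simp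
    ring
  have hne : (hyperplaneParam u ⁻¹' P).Nonempty :=
    ⟨⟨_, hcentroid⟩, fun i => by simp [hyperplaneParam]; positivity⟩
  refine pos_iff_ne_zero.1 ((hP.measure_pos _ hne).trans_le (measure_mono fun v hv => ?_))
  exact ⟨fun i => (hv i).le, by rw [← tailSum_zero_apply, tailSum_zero_hyperplaneParam]⟩

lemma hausdorffMeasure_simplex_ne_top (u : ℝ) : μH[(n : ℝ)] (simplex n u) ≠ ∞ := by
  rw [← hausdorffMeasure_preimage_hyperplaneParam fun x => tailSum_zero_of_mem_simplex]
  exact ((isometry_hyperplaneParam u).isClosedEmbedding.isCompact_preimage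
    (isCompact_simplex n u)).measure_lt_top.ne

/-- Inside `ker (tailSum 0)` the slice is a level set of the functional `tailSum k`, which does
not vanish there: it is `1` at `single k 1 - single 0 1`. -/
lemma hausdorffMeasure_simplex_inter_tailSum_eq {k : Fin (n + 1)} (hk : k ≠ 0) (u c : ℝ) :
    μH[(n : ℝ)] (simplex n u ∩ {x | tailSum k x = c}) = 0 := by
  rw [← hausdorffMeasure_preimage_hyperplaneParam fun x hx => tailSum_zero_of_mem_simplex hx.1]
  set g := tailSum k ∘ₗ (𝔼₀ n).subtype
  have hg : g ≠ 0 := by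
    have hv : EuclideanSpace.single k 1 - EuclideanSpace.single 0 1 ∈ 𝔼₀ n := by
      simp [map_sub, tailSum_single]
    intro h
    simpa [g, map_sub, tailSum_single, hk, Fin.pos_iff_ne_zero] using LinearMap.congr_fun h ⟨_, hv⟩
  refine measure_mono_null (fun v hv => ?_)
    (addHaar_levelSet_eq_zero _ hg (c - tailSum k (EuclideanSpace.single 0 u)))
  have : tailSum k (hyperplaneParam u v) = c := hv.2
  simp only [hyperplaneParam, map_add] at this
  simp only [Set.mem_ofPred_eq, g, LinearMap.comp_apply, Submodule.subtype_apply]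
  linarith

end StochasticDominance

open StochasticDominance ProbabilityTheory

/-- The probability that two independent uniform points on the
`n`-probability simplex are comparable with respect to first order
stochastic dominance is `2/(n+1)`. -/
theorem prob_fosd_comparable (n : ℕ) (hn : 1 ≤ n) (u : ℝ) (hu : 0 < u)
    (S : Set (EuclideanSpace ℝ (Fin (n + 1))))
    (hS : S = {x | (∀ i, 0 ≤ x i) ∧ ∑ i, x i = u})
    (μ : Measure (EuclideanSpace ℝ (Fin (n + 1))))
    (hμ : μ = (μH[(n : ℝ)] S)⁻¹ • (μH[(n : ℝ)]).restrict S) :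
    (μ.prod μ) {p : EuclideanSpace ℝ (Fin (n + 1)) × EuclideanSpace ℝ (Fin (n + 1)) |
        (∀ k : Fin (n + 1), ∑ i ∈ Finset.univ.filter (fun i => k ≤ i), p.1 i ≤
            ∑ i ∈ Finset.univ.filter (fun i => k ≤ i), p.2 i) ∨
        (∀ k : Fin (n + 1), ∑ i ∈ Finset.univ.filter (fun i => k ≤ i), p.2 i ≤
            ∑ i ∈ Finset.univ.filter (fun i => k ≤ i), p.1 i)}
      = 2 / ((n : ℝ≥0∞) + 1) := by
  change S = simplex n u at hS
  change μ = μH[(n : ℝ)][|S] at hμ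
  subst hS hμ
  have hS := (isClosed_simplex n u).measurableSet
  have := cond_isProbabilityMeasure_of_finite (hausdorffMeasure_simplex_ne_zero hu)
    (hausdorffMeasure_simplex_ne_top (n := n) u)
  refine measure_prod_comparable hn _ (fun t => measurePreserving_cond
    ((rotate t).toIsometryEquiv.measurePreserving_hausdorffMeasure _) hS
    (rotate_preimage_simplex t u)) ((ae_cond_mem hS).mono fun x => tailSum_zero_of_mem_simplex)
    fun k hk c => ?_
  rw [cond_apply hS, hausdorffMeasure_simplex_inter_tailSum_eq hk, mul_zero]
end

section
/- Let $n \ge 1$ and let $X_1, X_2$ be independent random variables, each uniformly distributed on $\Delta^{n,u}$. Then the probability that $X_1$ and $X_2$ are comparable with respect to monotone likelihood ratio dominance (i.e., $X_1 \le_r X_2$ or $X_2 \le_r X_1$) equals $\frac{2}{(n+1)!}$. -/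
/-!
Almost surely every coordinate of `X₁` is positive and the likelihood ratios `X₂ i / X₁ i` are
pairwise distinct, since a tie is a codimension-two condition on the `n`-dimensional simplex. The
pair is then comparable exactly when the ratios are increasing (`X₁ ≤_r X₂`) or decreasing
(`X₂ ≤_r X₁`). Permuting the coordinates of both points preserves the law of the pair, so the
permutation sorting the ratios is uniformly distributed on the `(n + 1)!` permutations of the
coordinates, and exactly two of them, the identity and the reversal, give comparable pairs.
-/

open MeasureTheory Finset ENNReal Module ProbabilityTheory Function

theorem Equiv.Perm.eq_of_strictMono_comp {α : Type*} [PartialOrder α] {m : ℕ} {f : Fin m → α}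
    {σ τ : Equiv.Perm (Fin m)} (hσ : StrictMono (f ∘ σ)) (hτ : StrictMono (f ∘ τ)) : σ = τ := by
  have hf : Injective f := hσ.injective.of_comp_right σ.surjective
  exact Equiv.ext fun k => hf (congrFun (Tuple.unique_monotone hσ.monotone hτ.monotone) k)

theorem Tuple.exists_strictMono_comp {α : Type*} [LinearOrder α] {m : ℕ} {f : Fin m → α}
    (hf : Injective f) : ∃ σ : Equiv.Perm (Fin m), StrictMono (f ∘ σ) :=
  ⟨Tuple.sort f, (Tuple.monotone_sort f).strictMono_of_injective (hf.comp (Tuple.sort f).injective)⟩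

theorem Fin.revPerm_ne_one {m : ℕ} (hm : 2 ≤ m) : Fin.revPerm ≠ (1 : Equiv.Perm (Fin m)) := by
  intro h
  have := congrArg (fun σ : Equiv.Perm (Fin m) => (σ ⟨0, by omega⟩ : ℕ)) h
  simp only [revPerm_apply, val_rev, Equiv.Perm.coe_one, id_eq] at this
  omega

theorem measure_eq_inv_card_of_ae_partition {Ω ι : Type*} [MeasurableSpace Ω] [Fintype ι]
    {ν : Measure Ω} [IsProbabilityMeasure ν] {B : ι → Set Ω} (hmeas : ∀ i, MeasurableSet (B i))
    (hdisj : Pairwise (Disjoint on B)) (hcover : ∀ᵐ ω ∂ν, ∃ i, ω ∈ B i)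
    (heq : ∀ i j, ν (B i) = ν (B j)) (i : ι) :
    ν (B i) = (Fintype.card ι : ℝ≥0∞)⁻¹ := by
  have hunion : ν (⋃ j, B j) = 1 := by
    rw [← measure_univ (μ := ν),
      ← ae_mem_iff_measure_eq (MeasurableSet.iUnion hmeas).nullMeasurableSet]
    simpa only [Set.mem_iUnion] using hcover
  apply ENNReal.eq_inv_of_mul_eq_one_left
  calc ν (B i) * Fintype.card ι = ∑ j, ν (B j) := by simp [heq _ i, mul_comm]
    _ = 1 := by rw [← hunion, measure_iUnion hdisj hmeas, tsum_fintype]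

theorem MeasureTheory.MeasurePreserving.cond {α : Type*} [MeasurableSpace α] {μ : Measure α}
    {f : α → α} (hf : MeasurePreserving f μ μ) {s : Set α} (hs : MeasurableSet s)
    (hfs : f ⁻¹' s = s) : MeasurePreserving f μ[|s] μ[|s] := by
  have := (hf.restrict_preimage hs).smul_measure (μ s)⁻¹
  rwa [hfs] at this

theorem LinearMap.hausdorffMeasure_preimage_singleton_eq_zero {V W : Type*}
    [NormedAddCommGroup V] [NormedSpace ℝ V] [FiniteDimensional ℝ V] [MeasurableSpace V]
    [BorelSpace V] [AddCommGroup W] [Module ℝ W] [FiniteDimensional ℝ W]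
    (F : V →ₗ[ℝ] W) (hF : Surjective F) (c : W) {d : ℝ}
    (hd : (finrank ℝ V : ℝ) < d + finrank ℝ W) :
    μH[d] (F ⁻¹' {c}) = 0 := by
  rcases (F ⁻¹' {c}).eq_empty_or_nonempty with h | hne
  · simp [h]
  have hrank : finrank ℝ (ker F) + finrank ℝ W = finrank ℝ V := by
    rw [← F.finrank_range_add_finrank_ker, range_eq_top.2 hF, finrank_top, add_comm]
  lift d to NNReal using by
    have : (finrank ℝ W : ℝ) ≤ finrank ℝ V := by exact_mod_cast hrank ▸ Nat.le_add_left _ _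
    linarith
  have hspan : vectorSpan ℝ (F ⁻¹' {c}) ≤ ker F := by
    rw [vectorSpan_def, Submodule.span_le]
    rintro _ ⟨x, hx, y, hy, rfl⟩
    simp_all [vsub_eq_sub]
  apply hausdorffMeasure_of_dimH_lt
  rw [Real.Convex.dimH_eq_finrank_vectorSpan ((convex_singleton c).linear_preimage F) hne]
  calc (finrank ℝ (vectorSpan ℝ (F ⁻¹' {c})) : ℝ≥0∞) ≤ finrank ℝ (ker F) := by
        exact_mod_cast Submodule.finrank_mono hspan
    _ < d := by
        have : (finrank ℝ (ker F) : ℝ) < d := by push_cast [← hrank] at hd; linarith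
        exact_mod_cast this

section LikelihoodRatio

variable {ι : Type*}

/-- `MLRLe x y` is `x ≤_r y`. -/
def MLRLe [LT ι] (x y : EuclideanSpace ℝ ι) : Prop :=
  ∀ i j, i < j → y i * x j ≤ x i * y j

noncomputable def permCoords [Fintype ι] (σ : Equiv.Perm ι) :
    EuclideanSpace ℝ ι ≃ₗᵢ[ℝ] EuclideanSpace ℝ ι :=
  LinearIsometryEquiv.piLpCongrLeft 2 ℝ ℝ σ.symm

@[simp]
theorem permCoords_apply [Fintype ι] (σ : Equiv.Perm ι) (x : EuclideanSpace ℝ ι) (i : ι) :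
    permCoords σ x i = x (σ i) := by
  simp [permCoords]

noncomputable def likelihoodRatio (p : EuclideanSpace ℝ ι × EuclideanSpace ℝ ι) (i : ι) : ℝ :=
  p.2 i / p.1 i

variable {p : EuclideanSpace ℝ ι × EuclideanSpace ℝ ι}

theorem likelihoodRatio_injective (hpos : ∀ i, 0 < p.1 i)
    (hne : ∀ i j, i ≠ j → p.1 i * p.2 j ≠ p.1 j * p.2 i) : Injective (likelihoodRatio p) := by
  intro i j hij
  by_contra h
  refine hne i j h ?_
  rw [likelihoodRatio, likelihoodRatio, div_eq_div_iff (hpos i).ne' (hpos j).ne'] at hij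
  linarith

theorem mlrLe_iff_monotone [PartialOrder ι] (hpos : ∀ i, 0 < p.1 i) :
    MLRLe p.1 p.2 ↔ Monotone (likelihoodRatio p) := by
  refine (monotone_iff_forall_lt.trans ?_).symm
  refine forall₂_congr fun i j => imp_congr_right fun _ => ?_
  rw [likelihoodRatio, likelihoodRatio, div_le_div_iff₀ (hpos i) (hpos j), mul_comm (p.2 j)]

theorem mlrLe_swap_iff_antitone [PartialOrder ι] (hpos : ∀ i, 0 < p.1 i) :
    MLRLe p.2 p.1 ↔ Antitone (likelihoodRatio p) := by
  refine (antitone_iff_forall_lt.trans ?_).symm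
  refine forall₂_congr fun i j => imp_congr_right fun _ => ?_
  rw [likelihoodRatio, likelihoodRatio, div_le_div_iff₀ (hpos j) (hpos i), mul_comm (p.2 i),
    mul_comm (p.2 j)]

end LikelihoodRatio

section Sorting

variable {m : ℕ}

def ratioSortedBy (σ : Equiv.Perm (Fin m)) :
    Set (EuclideanSpace ℝ (Fin m) × EuclideanSpace ℝ (Fin m)) :=
  {p | (∀ i, 0 < p.1 i) ∧ StrictMono (likelihoodRatio p ∘ σ)}

theorem measurableSet_ratioSortedBy (σ : Equiv.Perm (Fin m)) :
    MeasurableSet (ratioSortedBy σ) := by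
  simp only [ratioSortedBy, StrictMono, likelihoodRatio, comp_apply, measurableSet_setOfPred]
  fun_prop

theorem pairwise_disjoint_ratioSortedBy : Pairwise (Disjoint on ratioSortedBy (m := m)) :=
  fun _ _ hστ => Set.disjoint_left.2 fun _ hσ hτ =>
    hστ (Equiv.Perm.eq_of_strictMono_comp hσ.2 hτ.2)

theorem preimage_ratioSortedBy_one (σ : Equiv.Perm (Fin m)) :
    Prod.map (permCoords σ) (permCoords σ) ⁻¹' ratioSortedBy 1 = ratioSortedBy σ := by
  ext p
  exact and_congr ⟨fun h i => by simpa using h (σ.symm i), fun h i => by simpa using h (σ i)⟩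
    Iff.rfl

variable {p : EuclideanSpace ℝ (Fin m) × EuclideanSpace ℝ (Fin m)}

theorem exists_mem_ratioSortedBy (hpos : ∀ i, 0 < p.1 i) (hinj : Injective (likelihoodRatio p)) :
    ∃ σ, p ∈ ratioSortedBy σ :=
  (Tuple.exists_strictMono_comp hinj).imp fun _ hσ => ⟨hpos, hσ⟩

theorem mem_ratioSortedBy_one_iff (hpos : ∀ i, 0 < p.1 i) (hinj : Injective (likelihoodRatio p)) :
    p ∈ ratioSortedBy 1 ↔ MLRLe p.1 p.2 := by
  rw [mlrLe_iff_monotone hpos]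
  exact ⟨fun h => h.2.monotone, fun h => ⟨hpos, h.strictMono_of_injective hinj⟩⟩

theorem mem_ratioSortedBy_revPerm_iff (hpos : ∀ i, 0 < p.1 i)
    (hinj : Injective (likelihoodRatio p)) :
    p ∈ ratioSortedBy Fin.revPerm ↔ MLRLe p.2 p.1 := by
  rw [mlrLe_swap_iff_antitone hpos]
  refine ⟨fun h i j hij => ?_, fun h => ⟨hpos, ?_⟩⟩
  · simpa using h.2.monotone (Fin.rev_le_rev.2 hij)
  · exact (h.strictAnti_of_injective hinj).comp Fin.rev_strictAnti

theorem measure_mlrComparable (hm : 2 ≤ m)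
    (ν : Measure (EuclideanSpace ℝ (Fin m) × EuclideanSpace ℝ (Fin m))) [IsProbabilityMeasure ν]
    (hperm : ∀ σ, MeasurePreserving (Prod.map (permCoords σ) (permCoords σ)) ν ν)
    (hpos : ∀ᵐ p ∂ν, ∀ i, 0 < p.1 i)
    (hne : ∀ i j, i ≠ j → ∀ᵐ p ∂ν, p.1 i * p.2 j ≠ p.1 j * p.2 i) :
    ν {p | MLRLe p.1 p.2 ∨ MLRLe p.2 p.1} = 2 / m.factorial := by
  have hgood : ∀ᵐ p ∂ν, (∀ i, 0 < p.1 i) ∧ Injective (likelihoodRatio p) := by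
    have hne' : ∀ᵐ p ∂ν, ∀ i j, i ≠ j → p.1 i * p.2 j ≠ p.1 j * p.2 i := by
      simpa only [ae_all_iff, Filter.eventually_imp_distrib_left] using hne
    filter_upwards [hpos, hne'] with p hp hp'
    exact ⟨hp, likelihoodRatio_injective hp hp'⟩
  have hsorted : ∀ σ, ν (ratioSortedBy σ) = (m.factorial : ℝ≥0∞)⁻¹ := by
    intro σ
    rw [measure_eq_inv_card_of_ae_partition measurableSet_ratioSortedBy
      pairwise_disjoint_ratioSortedBy ?_ ?_ σ, Fintype.card_perm, Fintype.card_fin]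
    · filter_upwards [hgood] with p hp using exists_mem_ratioSortedBy hp.1 hp.2
    · intro σ τ
      rw [← preimage_ratioSortedBy_one σ, ← preimage_ratioSortedBy_one τ,
        (hperm σ).measure_preimage (measurableSet_ratioSortedBy 1).nullMeasurableSet,
        (hperm τ).measure_preimage (measurableSet_ratioSortedBy 1).nullMeasurableSet]
  have hcomparable : {p | MLRLe p.1 p.2 ∨ MLRLe p.2 p.1} =ᵐ[ν]
      (ratioSortedBy 1 ∪ ratioSortedBy Fin.revPerm : Set _) := by
    refine Filter.eventuallyEq_set.2 ?_
    filter_upwards [hgood] with p hp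
    rw [Set.mem_union, mem_ratioSortedBy_one_iff hp.1 hp.2, mem_ratioSortedBy_revPerm_iff hp.1 hp.2]
  rw [measure_congr hcomparable,
    measure_union (pairwise_disjoint_ratioSortedBy (Fin.revPerm_ne_one hm).symm)
      (measurableSet_ratioSortedBy _), hsorted, hsorted, div_eq_mul_inv, two_mul]

end Sorting

section Simplex

variable {ι : Type*} [Fintype ι]

def scaledSimplex (ι : Type*) [Fintype ι] (u : ℝ) : Set (EuclideanSpace ℝ ι) :=
  {x | (∀ i, 0 ≤ x i) ∧ ∑ i, x i = u}

def cornerSimplex (ι : Type*) [Fintype ι] (u : ℝ) : Set (EuclideanSpace ℝ ι) :=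
  {y | (∀ i, 0 ≤ y i) ∧ ∑ i, y i ≤ u}

theorem measurableSet_scaledSimplex (u : ℝ) : MeasurableSet (scaledSimplex ι u) := by
  simp only [scaledSimplex, measurableSet_setOfPred]
  fun_prop

theorem preimage_permCoords_scaledSimplex (σ : Equiv.Perm ι) (u : ℝ) :
    permCoords σ ⁻¹' scaledSimplex ι u = scaledSimplex ι u := by
  ext x
  simp only [scaledSimplex, Set.mem_preimage, Set.mem_ofPred_eq, permCoords_apply,
    Equiv.sum_comp σ (fun i => x i)]
  exact and_congr_left' ⟨fun h i => by simpa using h (σ.symm i), fun h i => h (σ i)⟩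

theorem measurePreserving_permCoords_cond (σ : Equiv.Perm ι) (d u : ℝ) :
    MeasurePreserving (permCoords σ) μH[d][|scaledSimplex ι u] μH[d][|scaledSimplex ι u] :=
  ((permCoords σ).toIsometryEquiv.measurePreserving_hausdorffMeasure d).cond
    (measurableSet_scaledSimplex u) (preimage_permCoords_scaledSimplex σ u)

theorem hausdorffMeasure_sum_eq_and_mul_eq_zero {i j : ι} (hij : i ≠ j) {a b : ℝ}
    (hab : a + b ≠ 0) (u : ℝ) {d : ℝ} (hd : (Fintype.card ι : ℝ) < d + 2) :
    μH[d] {y : EuclideanSpace ℝ ι | ∑ k, y k = u ∧ a * y j = b * y i} = 0 := by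
  classical
  let F : EuclideanSpace ℝ ι →ₗ[ℝ] ℝ × ℝ :=
    (∑ k, EuclideanSpace.projₗ k).prod (a • EuclideanSpace.projₗ j - b • EuclideanSpace.projₗ i)
  have hF : ∀ y, F y = (∑ k, y k, a * y j - b * y i) := fun y => by simp [F]
  have hsurj : Surjective F := by
    rintro ⟨s, t⟩
    refine ⟨((a * s - t) / (a + b)) • EuclideanSpace.single i 1 +
      ((b * s + t) / (a + b)) • EuclideanSpace.single j 1, ?_⟩
    simp only [hF, Prod.ext_iff, PiLp.add_apply, PiLp.smul_apply, PiLp.single_apply, smul_eq_mul,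
      mul_ite, mul_one, mul_zero, sum_add_distrib, sum_ite_eq', mem_univ, if_true, if_neg hij,
      if_neg hij.symm, zero_add, add_zero]
    constructor <;> field_simp <;> ring
  have hset : {y : EuclideanSpace ℝ ι | ∑ k, y k = u ∧ a * y j = b * y i} = F ⁻¹' {(u, 0)} := by
    ext y
    simp [hF, sub_eq_zero]
  rw [hset]
  refine F.hausdorffMeasure_preimage_singleton_eq_zero hsurj _ ?_
  simpa using hd

theorem ae_cond_scaledSimplex_not {P : EuclideanSpace ℝ ι → Prop} {d u : ℝ}
    (h : μH[d] {y | ∑ k, y k = u ∧ P y} = 0) :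
    ∀ᵐ y ∂μH[d][|scaledSimplex ι u], ¬ P y := by
  filter_upwards [ae_cond_mem (measurableSet_scaledSimplex u),
    cond_absolutelyContinuous.ae_le (measure_eq_zero_iff_ae_notMem.1 h)] with y hyS hy
  exact fun hP => hy ⟨hyS.2, hP⟩

theorem ae_cond_scaledSimplex_pos [Nontrivial ι] {d : ℝ} (hd : (Fintype.card ι : ℝ) < d + 2)
    (u : ℝ) : ∀ᵐ x ∂μH[d][|scaledSimplex ι u], ∀ i, 0 < x i := by
  refine ae_all_iff.2 fun i => ?_
  obtain ⟨j, hji⟩ := exists_ne i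
  -- the face `x i = 0` is the case `a = 0`, `b = 1`
  have hface :=
    hausdorffMeasure_sum_eq_and_mul_eq_zero hji.symm (a := 0) (b := 1) (by norm_num) u hd
  filter_upwards [ae_cond_mem (measurableSet_scaledSimplex u), ae_cond_scaledSimplex_not hface]
    with x hxS hx
  exact (hxS.1 i).lt_of_ne (by simpa [eq_comm] using hx)

theorem ae_cond_scaledSimplex_mul_ne {d : ℝ} (hd : (Fintype.card ι : ℝ) < d + 2) (u : ℝ)
    {x : EuclideanSpace ℝ ι} {i j : ι} (hij : i ≠ j) (hxi : 0 < x i) (hxj : 0 < x j) :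
    ∀ᵐ y ∂μH[d][|scaledSimplex ι u], x i * y j ≠ x j * y i :=
  ae_cond_scaledSimplex_not
    (hausdorffMeasure_sum_eq_and_mul_eq_zero hij (by positivity) u hd)

theorem isBounded_cornerSimplex (u : ℝ) : Bornology.IsBounded (cornerSimplex ι u) := by
  refine ((PiLp.antilipschitzWith_ofLp 2 _).isBounded_preimage
    (Metric.isBounded_Icc (0 : ι → ℝ) (fun _ => u))).subset fun y hy => ?_
  exact ⟨fun i => hy.1 i, fun i => (single_le_sum (fun j _ => hy.1 j) (mem_univ i)).trans hy.2⟩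

theorem interior_cornerSimplex_nonempty {u : ℝ} (hu : 0 < u) :
    (interior (cornerSimplex ι u)).Nonempty := by
  have hopen : IsOpen {y : EuclideanSpace ℝ ι | (∀ i, 0 < y i) ∧ ∑ i, y i < u} := by
    simp only [Set.ofPred_and, Set.ofPred_forall]
    exact (isOpen_iInter_of_finite fun i => isOpen_lt continuous_const (by fun_prop)).inter
      (isOpen_lt (by fun_prop) continuous_const)
  have hsub : {y : EuclideanSpace ℝ ι | (∀ i, 0 < y i) ∧ ∑ i, y i < u} ⊆ cornerSimplex ι u :=
    fun y hy => ⟨fun i => (hy.1 i).le, hy.2.le⟩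
  have hc : 0 < u / (Fintype.card ι + 1) := by positivity
  refine ⟨WithLp.toLp 2 fun _ => u / (Fintype.card ι + 1),
    hopen.subset_interior_iff.2 hsub ⟨fun _ => hc, ?_⟩⟩
  simp only [sum_const, card_univ, nsmul_eq_mul]
  rw [mul_div_assoc', div_lt_iff₀ (by positivity)]
  linarith

end Simplex

section SimplexChart

variable {n : ℕ}

noncomputable def snocNegSum (n : ℕ) :
    EuclideanSpace ℝ (Fin n) →ₗ[ℝ] EuclideanSpace ℝ (Fin (n + 1)) where
  toFun y := WithLp.toLp 2 (Fin.snoc y.ofLp (-∑ i, y i))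
  map_add' x y := by
    ext k
    refine Fin.lastCases ?_ (fun i => ?_) k <;> simp [Finset.sum_add_distrib, add_comm]
  map_smul' c x := by
    ext k
    refine Fin.lastCases ?_ (fun i => ?_) k <;> simp [Finset.mul_sum]

@[simp]
theorem snocNegSum_apply_castSucc (y : EuclideanSpace ℝ (Fin n)) (i : Fin n) :
    snocNegSum n y i.castSucc = y i := by
  simp [snocNegSum]

@[simp]
theorem snocNegSum_apply_last (y : EuclideanSpace ℝ (Fin n)) :
    snocNegSum n y (Fin.last n) = -∑ i, y i := by
  simp [snocNegSum]

theorem snocNegSum_injective : Injective (snocNegSum n) := fun x y h => by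
  ext i
  simpa using congrArg (fun z : EuclideanSpace ℝ (Fin (n + 1)) => z i.castSucc) h

theorem scaledSimplex_eq_image (u : ℝ) :
    scaledSimplex (Fin (n + 1)) u =
      (EuclideanSpace.single (Fin.last n) u + snocNegSum n ·) '' cornerSimplex (Fin n) u := by
  ext x
  constructor
  · rintro ⟨hx0, hxs⟩
    rw [Fin.sum_univ_castSucc] at hxs
    refine ⟨WithLp.toLp 2 fun i => x i.castSucc, ⟨fun i => hx0 _, ?_⟩, ?_⟩
    · simpa using (le_of_add_le_of_nonneg_left hxs.le (hx0 _))
    · ext k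
      refine Fin.lastCases ?_ (fun i => ?_) k
      · simp only [PiLp.add_apply, PiLp.single_eq_same, snocNegSum_apply_last]
        linarith
      · simp
  · rintro ⟨y, ⟨hy0, hys⟩, rfl⟩
    refine ⟨fun k => ?_, ?_⟩
    · refine Fin.lastCases ?_ (fun i => ?_) k
      · simpa using hys
      · simpa using hy0 i
    · simp [Fin.sum_univ_castSucc]

theorem hausdorffMeasure_scaledSimplex (u : ℝ) :
    μH[(n : ℝ)] (scaledSimplex (Fin (n + 1)) u) =
      ENNReal.ofReal (snocNegSum n).normDet * μH[(n : ℝ)] (cornerSimplex (Fin n) u) := by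
  rw [scaledSimplex_eq_image, ← Set.image_image (EuclideanSpace.single (Fin.last n) u + ·),
    (isometry_add_left _).hausdorffMeasure_image (Or.inl n.cast_nonneg)]
  simpa using (snocNegSum n).hausdorffMeasure_image (cornerSimplex (Fin n) u)

theorem hausdorffMeasure_scaledSimplex_pos {u : ℝ} (hu : 0 < u) :
    0 < μH[(n : ℝ)] (scaledSimplex (Fin (n + 1)) u) := by
  have hdet : 0 < (snocNegSum n).normDet :=
    (LinearMap.normDet_nonneg _).lt_of_ne' (LinearMap.normDet_eq_zero_iff_ker_ne_bot.not.2
      (not_not.2 (LinearMap.ker_eq_bot.2 snocNegSum_injective)))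
  rw [hausdorffMeasure_scaledSimplex]
  exact ENNReal.mul_pos (ENNReal.ofReal_pos.2 hdet).ne'
    (Measure.measure_pos_of_nonempty_interior _ (interior_cornerSimplex_nonempty hu)).ne'

theorem hausdorffMeasure_scaledSimplex_lt_top (u : ℝ) :
    μH[(n : ℝ)] (scaledSimplex (Fin (n + 1)) u) < ∞ := by
  rw [hausdorffMeasure_scaledSimplex]
  exact ENNReal.mul_lt_top ofReal_lt_top (isBounded_cornerSimplex u).measure_lt_top

end SimplexChart

/-- The probability that two independent uniform points on the
`n`-probability simplex are comparable with respect to monotone likelihood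
ratio dominance is `2/(n+1)!`. -/
theorem prob_mlr_comparable (n : ℕ) (hn : 1 ≤ n) (u : ℝ) (hu : 0 < u)
    (S : Set (EuclideanSpace ℝ (Fin (n + 1))))
    (hS : S = {x | (∀ i, 0 ≤ x i) ∧ ∑ i, x i = u})
    (μ : Measure (EuclideanSpace ℝ (Fin (n + 1))))
    (hμ : μ = (μH[(n : ℝ)] S)⁻¹ • (μH[(n : ℝ)]).restrict S) :
    (μ.prod μ) {p : EuclideanSpace ℝ (Fin (n + 1)) × EuclideanSpace ℝ (Fin (n + 1)) |
        (∀ i j : Fin (n + 1), i < j → p.2 i * p.1 j ≤ p.1 i * p.2 j) ∨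
        (∀ i j : Fin (n + 1), i < j → p.1 i * p.2 j ≤ p.2 i * p.1 j)}
      = 2 / ((n + 1).factorial : ℝ≥0∞) := by
  subst hS
  change μ = μH[(n : ℝ)][|scaledSimplex (Fin (n + 1)) u] at hμ
  subst hμ
  have : IsProbabilityMeasure μH[(n : ℝ)][|scaledSimplex (Fin (n + 1)) u] :=
    cond_isProbabilityMeasure_of_finite (hausdorffMeasure_scaledSimplex_pos hu).ne'
      (hausdorffMeasure_scaledSimplex_lt_top u).ne
  have : Nontrivial (Fin (n + 1)) := Fin.nontrivial_iff_two_le.2 (by omega)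
  have hd : (Fintype.card (Fin (n + 1)) : ℝ) < n + 2 := by simp
  have hpos := ae_cond_scaledSimplex_pos hd u
  have hperm := fun σ => measurePreserving_permCoords_cond (ι := Fin (n + 1)) σ n u
  refine measure_mlrComparable (by omega) _ (fun σ => (hperm σ).prod (hperm σ))
    (measurePreserving_fst.quasiMeasurePreserving.ae hpos) fun i j hij => ?_
  rw [Measure.ae_prod_iff_ae_ae (by measurability)]
  filter_upwards [hpos] with x hx using ae_cond_scaledSimplex_mul_ne hd u hij (hx i) (hx j)
end

section
/- Let $h = x_{i_0} \cdots x_{i_{n-1}} \in H_k(n)$ for some $0 \le k \le n$ (i.e., $0 \le i_j \le \min\{j,k\}$ for all $0 \le j \le n-1$). Then $h' = h \cdot x_k \in H_{n+1}(n+1)$, and $(n+1) \binom{n}{d_0(h),\ldots,d_{n-1}(h)} \frac{1}{d_k(h)+1} = \binom{n+1}{d_0(h'),\ldots,d_n(h')}$, where $d_i(h')= d_i(h)$ for $i \ne k$ and $d_k(h') = d_k(h) + 1$. Moreover, every $h' \in H_{n+1}(n+1)$ arises in this way from some $0 \le k \le n$ and $h \in H_k(n)$. -/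
open Finset

/-- Degree vectors of the monomials `x_{i_0} ⋯ x_{i_{n-1}}` with
`i_j ≤ min j k` for all `j` (the set `H_k(n)` of the paper). -/
noncomputable def HdegK (n k : ℕ) : Finset (Fin n → ℕ) :=
  ((Finset.univ : Finset (Fin n → Fin n)).filter
      (fun i => ∀ j : Fin n, (i j : ℕ) ≤ min (j : ℕ) k)).image
    (fun i => fun m : Fin n => (Finset.univ.filter (fun j : Fin n => i j = m)).card)

/-- The degree vector of `h · x_k`, where `h` has degree vector `d`. -/
def extDeg (n k : ℕ) (d : Fin n → ℕ) : Fin (n + 1) → ℕ :=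
  fun i => (if h : (i : ℕ) < n then d ⟨i, h⟩ else 0) + (if (i : ℕ) = k then 1 else 0)

/-- The degree vector (fibre counts) of a function. -/
noncomputable def cnt {n : ℕ} (i : Fin n → Fin n) : Fin n → ℕ :=
  fun m => (Finset.univ.filter (fun j : Fin n => i j = m)).card

lemma mem_HdegK_iff {n k : ℕ} {d : Fin n → ℕ} :
    d ∈ HdegK n k ↔ ∃ i : Fin n → Fin n,
      (∀ j : Fin n, (i j : ℕ) ≤ min (j : ℕ) k) ∧ cnt i = d := by
  simp only [HdegK, Finset.mem_image, Finset.mem_filter, Finset.mem_univ, true_and]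
  exact Iff.rfl

lemma sum_cnt {n : ℕ} (i : Fin n → Fin n) : ∑ m : Fin n, cnt i m = n := by
  have := Finset.card_eq_sum_card_fiberwise
    (f := i) (s := (univ : Finset (Fin n))) (t := univ) (fun x _ => mem_univ _)
  simpa [cnt] using this.symm

lemma sum_ext {n k : ℕ} (hk : k ≤ n) (d : Fin n → ℕ) :
    ∑ m : Fin (n + 1), extDeg n k d m = (∑ m : Fin n, d m) + 1 := by
  have hone : ∀ j : Fin (n + 1), ((j : ℕ) = k) = (j = ⟨k, by omega⟩) := by
    simp [Fin.ext_iff]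
  simp only [extDeg, Finset.sum_add_distrib, hone, Finset.sum_ite_eq' univ, mem_univ, if_true]
  congr 1
  rw [Fin.sum_univ_castSucc]
  simp

lemma prod_ext_factorial {n k : ℕ} (hk : k ≤ n) (d : Fin n → ℕ) :
    ∏ m : Fin (n + 1), (extDeg n k d m).factorial
      = ((if h : k < n then d ⟨k, h⟩ else 0) + 1) * ∏ m : Fin n, (d m).factorial := by
  rw [Fin.prod_univ_castSucc]
  have hlast : extDeg n k d (Fin.last n) = if n = k then 1 else 0 := by
    simp [extDeg]
  have hcast : ∀ j : Fin n, extDeg n k d j.castSucc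
      = d j + (if (j : ℕ) = k then 1 else 0) := by
    intro j
    simp [extDeg, j.isLt]
  have hfact : ∀ j : Fin n, (extDeg n k d j.castSucc).factorial
      = (d j).factorial * (if j = (if h : k < n then (⟨k, h⟩ : Fin n) else j) ∧ k < n
          then d j + 1 else 1) := by
    intro j
    rw [hcast j]
    by_cases h : k < n
    · by_cases hj : (j : ℕ) = k
      · have : j = (⟨k, h⟩ : Fin n) := by exact Fin.ext hj
        simp [hj, this, h, Nat.factorial_succ, Nat.mul_comm]
      · have : ¬ j = (⟨k, h⟩ : Fin n) := by
          intro hh; exact hj (by simpa using congrArg Fin.val hh)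
        simp [hj, this, h]
    · have hj : ¬ (j : ℕ) = k := by omega
      simp [hj, h]
  rw [Finset.prod_congr rfl (fun j _ => hfact j), Finset.prod_mul_distrib]
  by_cases h : k < n
  · have : (∏ j : Fin n, (if j = (if h' : k < n then (⟨k, h'⟩ : Fin n) else j) ∧ k < n
        then d j + 1 else 1)) = d ⟨k, h⟩ + 1 := by
      simp only [h, dif_pos, and_true]
      rw [Finset.prod_ite_eq' univ]
      simp
    rw [this, hlast]
    have hnk : ¬ n = k := by omega
    simp [hnk, h]
    ring
  · have hnk : n = k := by omega
    have : (∏ j : Fin n, (if j = (if h' : k < n then (⟨k, h'⟩ : Fin n) else j) ∧ k < n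
        then d j + 1 else 1)) = 1 := by
      simp [h]
    rw [this, hlast]
    simp [hnk, h]

lemma key_mult {n k : ℕ} (hk : k ≤ n) (d : Fin n → ℕ) (hd : ∑ m : Fin n, d m = n) :
    ((if h : k < n then d ⟨k, h⟩ else 0) + 1) *
        Nat.multinomial Finset.univ (extDeg n k d)
      = (n + 1) * Nat.multinomial Finset.univ d := by
  set P := ∏ m : Fin n, (d m).factorial with hP
  have hPpos : 0 < P := Finset.prod_pos (fun _ _ => Nat.factorial_pos _)
  have h1 := Nat.multinomial_spec (univ : Finset (Fin n)) d
  have h2 := Nat.multinomial_spec (univ : Finset (Fin (n + 1))) (extDeg n k d)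
  rw [prod_ext_factorial hk d, sum_ext hk d, hd] at h2
  rw [hd] at h1
  set D := (if h : k < n then d ⟨k, h⟩ else 0) + 1 with hD
  set M := Nat.multinomial (univ : Finset (Fin n)) d
  set M' := Nat.multinomial (univ : Finset (Fin (n + 1))) (extDeg n k d)
  apply Nat.eq_of_mul_eq_mul_left hPpos
  calc P * (D * M') = D * P * M' := by ring
    _ = (n + 1).factorial := h2
    _ = (n + 1) * n.factorial := Nat.factorial_succ n
    _ = (n + 1) * (P * M) := by rw [h1]
    _ = P * ((n + 1) * M) := by ring

/-- Multiplication by `x_k` maps `H_k(n)` into `H_{n+1}(n+1)`, transforms the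
multinomial coefficients as stated, and every element of `H_{n+1}(n+1)`
arises this way. -/
theorem mul_xk_correspondence (n k : ℕ) (hk : k ≤ n) :
    (∀ d ∈ HdegK n k,
      extDeg n k d ∈ HdegK (n + 1) (n + 1) ∧
      ((n + 1 : ℚ) * (Nat.multinomial Finset.univ d : ℚ) /
          ((if h : k < n then d ⟨k, h⟩ else 0) + 1)
        = (Nat.multinomial Finset.univ (extDeg n k d) : ℚ))) ∧
    (∀ d' ∈ HdegK (n + 1) (n + 1),
      ∃ k' ≤ n, ∃ d ∈ HdegK n k', d' = extDeg n k' d) := by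
  constructor
  · intro d hd
    obtain ⟨i, hi, rfl⟩ := mem_HdegK_iff.1 hd
    constructor
    · -- membership
      refine mem_HdegK_iff.2 ⟨fun j : Fin (n + 1) =>
        if h : (j : ℕ) < n then (i ⟨j, h⟩).castSucc else ⟨k, by omega⟩, ?_, ?_⟩
      · intro j
        by_cases h : (j : ℕ) < n
        · have h1 : (i ⟨(j : ℕ), h⟩ : ℕ) ≤ min (j : ℕ) k := hi ⟨(j : ℕ), h⟩
          simp only [dif_pos h, Fin.coe_castSucc]
          omega
        · simp only [dif_neg h]
          have hj : (j : ℕ) = n := by omega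
          show (k : ℕ) ≤ min (j : ℕ) (n + 1)
          omega
      · funext m
        simp only [cnt, Finset.card_filter, extDeg]
        rw [Fin.sum_univ_castSucc]
        have hc : ∀ j : Fin n,
            ((if h : ((j.castSucc : Fin (n+1)) : ℕ) < n then (i ⟨(j.castSucc : Fin (n+1)), h⟩).castSucc
              else ⟨k, by omega⟩) : Fin (n + 1)) = (i j).castSucc := by
          intro j
          have h : ((j.castSucc : Fin (n+1)) : ℕ) < n := by simp [j.isLt]
          simp only [dif_pos h]
          congr 1
        have hl : ((if h : ((Fin.last n : Fin (n+1)) : ℕ) < n then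
              (i ⟨(Fin.last n : Fin (n+1)), h⟩).castSucc else ⟨k, by omega⟩) : Fin (n + 1))
            = ⟨k, by omega⟩ := by
          simp
        simp only [hc, hl]
        have h2 : ((⟨k, by omega⟩ : Fin (n + 1)) = m) ↔ ((m : ℕ) = k) := by
          constructor
          · intro h; exact (congrArg Fin.val h).symm
          · intro h; exact Fin.ext h.symm
        by_cases hm : (m : ℕ) < n
        · rw [dif_pos hm]
          have h1 : ∀ j : Fin n, ((i j).castSucc = m) ↔ (i j = ⟨m, hm⟩) := by
            intro j; constructor
            · intro h; exact Fin.ext (by simpa using congrArg Fin.val h)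
            · intro h; exact Fin.ext (by simpa using congrArg Fin.val h)
          simp only [cnt, Finset.card_filter, h1, h2]
        · rw [dif_neg hm]
          have h1 : ∀ j : Fin n, ((i j).castSucc = m) ↔ False := by
            intro j
            simp only [iff_false]
            intro h
            have := congrArg Fin.val h
            simp at this
            have := (i j).isLt
            omega
          simp only [h1, h2, if_false, Finset.sum_const_zero, zero_add]
    · -- multinomial identity
      have hkey := key_mult hk (cnt i) (sum_cnt i)
      have hQ : ((((if h : k < n then cnt i ⟨k, h⟩ else 0) + 1 : ℕ)) : ℚ) *
          (Nat.multinomial Finset.univ (extDeg n k (cnt i)) : ℚ)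
          = ((n : ℚ) + 1) * (Nat.multinomial Finset.univ (cnt i) : ℚ) := by
        exact_mod_cast congrArg (Nat.cast : ℕ → ℚ) hkey
      have hcast : (((if h : k < n then cnt i ⟨k, h⟩ else 0) : ℕ) : ℚ)
          = (if h : k < n then (cnt i ⟨k, h⟩ : ℚ) else 0) := by
        split_ifs <;> simp
      have hpos : ((if h : k < n then (cnt i ⟨k, h⟩ : ℚ) else 0) + 1) ≠ 0 := by
        split_ifs <;> positivity
      rw [Nat.cast_add, Nat.cast_one, hcast] at hQ
      rw [hcast, div_eq_iff hpos]
      linear_combination -hQ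
  · intro d' hd'
    obtain ⟨i', hi', rfl⟩ := mem_HdegK_iff.1 hd'
    have hij : ∀ j : Fin (n + 1), (i' j : ℕ) ≤ (j : ℕ) := by
      intro j
      have := hi' j
      omega
    obtain ⟨j0, -, hmax⟩ := Finset.exists_max_image (univ : Finset (Fin (n + 1)))
      (fun j => (i' j : ℕ)) ⟨0, mem_univ 0⟩
    set k' := (i' j0 : ℕ) with hk'
    have hmax' : ∀ j : Fin (n + 1), (i' j : ℕ) ≤ k' := fun j => hmax j (mem_univ j)
    have hk'n : k' ≤ n := by
      have := hij j0
      have := j0.isLt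
      omega
    have hlt : ∀ j : Fin n, (i' (j0.succAbove j) : ℕ) < n := by
      intro j
      by_contra h
      have h1 : (i' (j0.succAbove j) : ℕ) = n := by
        have := (i' (j0.succAbove j)).isLt; omega
      have h2 : ((j0.succAbove j : Fin (n + 1)) : ℕ) = n := by
        have := hij (j0.succAbove j)
        have := (j0.succAbove j).isLt
        omega
      have h3 : (j0 : ℕ) = n := by
        have := hmax' (j0.succAbove j)
        have := hij j0
        have := j0.isLt
        omega
      exact Fin.succAbove_ne j0 j (Fin.ext (by omega))
    set i : Fin n → Fin n := fun j => ⟨(i' (j0.succAbove j) : ℕ), hlt j⟩ with hi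
    have hcond : ∀ j : Fin n, (i j : ℕ) ≤ min (j : ℕ) k' := by
      intro j
      have h1 : (i j : ℕ) ≤ k' := hmax' _
      have h2 : (i j : ℕ) ≤ (j : ℕ) := by
        have hval : (i j : ℕ) = (i' (j0.succAbove j) : ℕ) := rfl
        rw [hval]
        rcases lt_or_ge (j.castSucc) j0 with h | h
        · rw [Fin.succAbove_of_castSucc_lt _ _ h]
          simpa using hij j.castSucc
        · rw [Fin.succAbove_of_le_castSucc _ _ h]
          have h3 : (j0 : ℕ) ≤ (j : ℕ) := by simpa [Fin.le_def] using h
          have h4 : (i' j.succ : ℕ) ≤ k' := hmax' j.succ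
          have h5 : k' ≤ (j0 : ℕ) := hij j0
          have h6 : (i' j.succ : ℕ) ≤ ((j.succ : Fin (n+1)) : ℕ) := hij j.succ
          omega
      omega
    refine ⟨k', hk'n, cnt i, mem_HdegK_iff.2 ⟨i, hcond, rfl⟩, ?_⟩
    funext m
    simp only [cnt, Finset.card_filter, extDeg]
    rw [Fin.sum_univ_succAbove _ j0]
    have h2 : (i' j0 = m) ↔ ((m : ℕ) = k') := by
      constructor
      · intro h; exact (congrArg Fin.val h).symm
      · intro h; exact Fin.ext h.symm
    by_cases hm : (m : ℕ) < n
    · rw [dif_pos hm]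
      have h1 : ∀ j : Fin n, (i' (j0.succAbove j) = m) ↔ (i j = ⟨m, hm⟩) := by
        intro j
        constructor
        · intro h; exact Fin.ext (by simpa [hi] using congrArg Fin.val h)
        · intro h
          exact Fin.ext (by simpa [hi] using congrArg Fin.val h)
      simp only [cnt, Finset.card_filter, h1, h2]
      rw [add_comm]
    · rw [dif_neg hm]
      have h1 : ∀ j : Fin n, (i' (j0.succAbove j) = m) ↔ False := by
        intro j
        simp only [iff_false]
        intro h
        have := congrArg Fin.val h
        have := hlt j
        omega
      simp only [h1, h2, if_false, Finset.sum_const_zero, add_zero, zero_add]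
end
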